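/- arXiv:1702.02080 — 3 statements merged into one kernel-verified Lean document; each statement's English description precedes it below -/
import Mathlib

section
/- Let z_1, ..., z_n be complex numbers with Re(z_i) > 0 and let c_1, ..., c_n ∈ ℂ. Then (1/(2π)) ∫_{-∞}^{∞} |Σ_{i=1}^n c_i/(iω - z_i)|² dω = Σ_{i=1}^n Σ_{j=1}^n c_i conj(c_j) / (z_i + conj(z_j)). -/
open Complex Filter Topology Set MeasureTheory

lemma quadLB (a r ω : ℝ) : r^2/(1+a^2+r^2) * (1+ω^2) ≤ (ω-a)^2 + r^2 := by
  rw [div_mul_eq_mul_div, div_le_iff₀ (by positivity)]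
  nlinarith [sq_nonneg ((1+a^2)*ω - a*(1+a^2+r^2)), sq_nonneg (r^2)]

lemma normsq_fact (x : ℂ) : ‖x‖^2 = x.re^2 + x.im^2 := by
  rw [← Complex.normSq_eq_norm_sq, Complex.normSq_apply]; ring

lemma norm_add_ge (z : ℂ) (ω : ℝ) :
    Real.sqrt (z.re^2/(1+z.im^2+z.re^2)) * Real.sqrt (1+ω^2) ≤ ‖(ω:ℂ)+I*z‖ := by
  rw [← Real.sqrt_mul (by positivity), ← Real.sqrt_sq (norm_nonneg ((ω:ℂ)+I*z))]
  apply Real.sqrt_le_sqrt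
  have h : ‖(ω:ℂ) + I*z‖^2 = (ω - z.im)^2 + z.re^2 := by rw [normsq_fact]; simp; ring
  rw [h]; exact quadLB z.im z.re ω

lemma norm_sub_ge (w : ℂ) (ω : ℝ) :
    Real.sqrt (w.re^2/(1+w.im^2+w.re^2)) * Real.sqrt (1+ω^2) ≤ ‖(ω:ℂ)-I*w‖ := by
  rw [← Real.sqrt_mul (by positivity), ← Real.sqrt_sq (norm_nonneg ((ω:ℂ)-I*w))]
  apply Real.sqrt_le_sqrt
  have h : ‖(ω:ℂ) - I*w‖^2 = (ω + w.im)^2 + w.re^2 := by rw [normsq_fact]; simp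
  rw [h]
  have := quadLB (-w.im) w.re ω
  have e : (1 + (-w.im)^2 + w.re^2) = 1 + w.im^2 + w.re^2 := by ring
  rw [e] at this
  have e2 : (ω - -w.im)^2 = (ω + w.im)^2 := by ring
  rw [e2] at this; exact this

lemma ne_add (z : ℂ) (hz : 0 < z.re) (ω : ℝ) : (ω:ℂ) + I*z ≠ 0 := by
  intro h
  have : ((ω:ℂ) + I*z).im = 0 := by rw [h]; simp
  simp at this; linarith

lemma ne_sub (w : ℂ) (hw : 0 < w.re) (ω : ℝ) : (ω:ℂ) - I*w ≠ 0 := by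
  intro h
  have : ((ω:ℂ) - I*w).im = 0 := by rw [h]; simp
  simp at this; linarith

lemma integrable_kernel (z w : ℂ) (hz : 0 < z.re) (hw : 0 < w.re) :
    Integrable (fun ω:ℝ => (((ω:ℂ)+I*z)*((ω:ℂ)-I*w))⁻¹) := by
  set c₁ := Real.sqrt (z.re^2/(1+z.im^2+z.re^2)) with hc₁
  set c₂ := Real.sqrt (w.re^2/(1+w.im^2+w.re^2)) with hc₂
  have hc₁0 : 0 < c₁ := Real.sqrt_pos.2 (by positivity)
  have hc₂0 : 0 < c₂ := Real.sqrt_pos.2 (by positivity)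
  have hcont : Continuous (fun ω:ℝ => (((ω:ℂ)+I*z)*((ω:ℂ)-I*w))⁻¹) := by
    apply Continuous.inv₀
    · exact ((Complex.continuous_ofReal.add continuous_const).mul
        (Complex.continuous_ofReal.sub continuous_const))
    · intro ω; exact mul_ne_zero (ne_add z hz ω) (ne_sub w hw ω)
  apply Integrable.mono' ((integrable_inv_one_add_sq).const_mul ((c₁*c₂)⁻¹))
    hcont.aestronglyMeasurable
  refine Filter.Eventually.of_forall (fun ω => ?_)
  rw [norm_inv, norm_mul]
  have h1 := norm_add_ge z ω
  have h2 := norm_sub_ge w ω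
  have hsq : Real.sqrt (1+ω^2) * Real.sqrt (1+ω^2) = 1+ω^2 :=
    Real.mul_self_sqrt (by positivity)
  have key : (c₁*c₂) * (1+ω^2) ≤ ‖(ω:ℂ)+I*z‖ * ‖(ω:ℂ)-I*w‖ := by
    have e : (c₁*c₂)*(1+ω^2) = (c₁*Real.sqrt (1+ω^2)) * (c₂*Real.sqrt (1+ω^2)) := by
      linear_combination (-(c₁*c₂))*hsq
    rw [e]
    exact mul_le_mul h1 h2 (by positivity) (norm_nonneg _)
  calc (‖(ω:ℂ)+I*z‖ * ‖(ω:ℂ)-I*w‖)⁻¹ ≤ ((c₁*c₂) * (1+ω^2))⁻¹ := by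
        apply inv_anti₀ (by positivity) key
    _ = (c₁*c₂)⁻¹ * (1+ω^2)⁻¹ := by rw [mul_inv]


lemma ratio_tendsto (a r b s : ℝ) (hs : s ≠ 0) {l : Filter ℝ}
    (hl : Tendsto (fun ω:ℝ => ω⁻¹) l (𝓝 0)) (hne : ∀ᶠ ω in l, ω ≠ 0) :
    Tendsto (fun ω => ((ω-a)^2+r^2)/((ω-b)^2+s^2)) l (𝓝 1) := by
  set q : ℝ → ℝ := fun u => ((1-a*u)^2+(r*u)^2)/((1-b*u)^2+(s*u)^2) with hq
  have hq0 : q 0 = 1 := by simp [hq]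
  have hqc : ContinuousAt q 0 := by
    apply ContinuousAt.div (by fun_prop) (by fun_prop)
    norm_num
  have h1 : Tendsto (fun ω => q ω⁻¹) l (𝓝 1) := by
    rw [← hq0]
    exact hqc.tendsto.comp hl
  apply h1.congr'
  filter_upwards [hne] with ω hω
  have hd : (1-b*ω⁻¹)^2+(s*ω⁻¹)^2 ≠ 0 := by
    have : (1-b*ω⁻¹)^2+(s*ω⁻¹)^2 > 0 := by positivity
    linarith
  simp only [hq]
  rw [div_eq_div_iff hd (by positivity)]
  field_simp

lemma inv_atBot : Tendsto (fun ω:ℝ => ω⁻¹) atBot (𝓝 0) := by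
  have h1 : Tendsto (fun ω:ℝ => ((-ω)⁻¹ : ℝ)) atBot (𝓝 0) :=
    Tendsto.comp (tendsto_inv_atTop_zero) tendsto_neg_atBot_atTop
  have h2 : Tendsto (fun ω:ℝ => (-(-ω)⁻¹ : ℝ)) atBot (𝓝 (-0)) := h1.neg
  have he : (fun ω:ℝ => (-(-ω)⁻¹ : ℝ)) = fun ω:ℝ => ω⁻¹ := by
    funext ω; rw [inv_neg]; ring
  rw [he, neg_zero] at h2; exact h2


lemma arg_atTop (c : ℂ) : Tendsto (fun ω:ℝ => Complex.arg ((ω:ℂ)+c)) atTop (𝓝 0) := by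
  have habs_top : Tendsto (fun ω:ℝ => ‖(ω:ℂ)+c‖) atTop atTop := by
    apply tendsto_atTop_mono (fun ω => ?_) (tendsto_atTop_add_const_right _ c.re tendsto_id)
    have := Complex.re_le_norm ((ω:ℂ)+c)
    simpa using this
  have hio : Tendsto (fun ω:ℝ => ((ω:ℂ)+c).im / ‖(ω:ℂ)+c‖) atTop (𝓝 0) := by
    have h := Tendsto.div_atTop (tendsto_const_nhds (x := c.im)) habs_top
    apply h.congr; intro ω; simp
  have harcsin : Tendsto (fun ω:ℝ => Real.arcsin (((ω:ℂ)+c).im / ‖(ω:ℂ)+c‖))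
      atTop (𝓝 0) := by
    have := (Real.continuous_arcsin.tendsto 0).comp hio
    simpa [Function.comp_def] using this
  apply harcsin.congr'
  filter_upwards [eventually_ge_atTop (-c.re)] with ω hω
  rw [Complex.arg_of_re_nonneg (by simp; linarith)]

lemma abs_atBot (c : ℂ) : Tendsto (fun ω:ℝ => ‖(ω:ℂ)+c‖) atBot atTop := by
  apply tendsto_atTop_mono (fun ω => ?_)
    (tendsto_neg_atBot_atTop.comp (tendsto_atBot_add_const_right _ c.re tendsto_id))
  have h1 : |((ω:ℂ)+c).re| ≤ ‖(ω:ℂ)+c‖ := Complex.abs_re_le_norm _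
  have h2 : ((ω:ℂ)+c).re = ω + c.re := by simp
  simp only [Function.comp]
  rw [h2] at h1
  calc -(ω + c.re) ≤ |ω + c.re| := neg_le_abs _
    _ ≤ _ := h1

lemma arg_atBot_neg (c : ℂ) (him : c.im < 0) :
    Tendsto (fun ω:ℝ => Complex.arg ((ω:ℂ)+c)) atBot (𝓝 (-Real.pi)) := by
  have hio : Tendsto (fun ω:ℝ => (-((ω:ℂ)+c)).im / ‖(ω:ℂ)+c‖) atBot (𝓝 0) := by
    have h := Tendsto.div_atTop (tendsto_const_nhds (x := -c.im)) (abs_atBot c)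
    apply h.congr; intro ω; simp
  have harcs : Tendsto (fun ω:ℝ => Real.arcsin ((-((ω:ℂ)+c)).im / ‖(ω:ℂ)+c‖) - Real.pi)
      atBot (𝓝 (-Real.pi)) := by
    have := ((Real.continuous_arcsin.tendsto 0).comp hio).sub_const Real.pi
    simpa using this
  apply harcs.congr'
  filter_upwards [eventually_lt_atBot (-c.re)] with ω hω
  rw [Complex.arg_of_re_neg_of_im_neg (by simp; linarith) (by simpa using him)]

lemma arg_atBot_pos (c : ℂ) (him : 0 < c.im) :
    Tendsto (fun ω:ℝ => Complex.arg ((ω:ℂ)+c)) atBot (𝓝 (Real.pi)) := by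
  have hio : Tendsto (fun ω:ℝ => (-((ω:ℂ)+c)).im / ‖(ω:ℂ)+c‖) atBot (𝓝 0) := by
    have h := Tendsto.div_atTop (tendsto_const_nhds (x := -c.im)) (abs_atBot c)
    apply h.congr; intro ω; simp
  have harcs : Tendsto (fun ω:ℝ => Real.arcsin ((-((ω:ℂ)+c)).im / ‖(ω:ℂ)+c‖) + Real.pi)
      atBot (𝓝 (Real.pi)) := by
    have := ((Real.continuous_arcsin.tendsto 0).comp hio).add_const Real.pi
    simpa using this
  apply harcs.congr'
  filter_upwards [eventually_lt_atBot (-c.re)] with ω hω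
  rw [Complex.arg_of_re_neg_of_im_nonneg (by simp; linarith) (by simp; linarith)]

lemma lognorm_tendsto (z w : ℂ) (hz : 0 < z.re) (hw : 0 < w.re) {l : Filter ℝ}
    (hl : Tendsto (fun ω:ℝ => ω⁻¹) l (𝓝 0)) (hne : ∀ᶠ ω in l, ω ≠ 0) :
    Tendsto (fun ω:ℝ => Real.log (‖(ω:ℂ)-I*w‖) - Real.log (‖(ω:ℂ)+I*z‖))
      l (𝓝 0) := by
  have habs1 : ∀ ω:ℝ, ‖(ω:ℂ)-I*w‖ = Real.sqrt ((ω-(-w.im))^2+w.re^2) := by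
    intro ω; rw [Complex.norm_def]; congr 1; rw [Complex.normSq_apply]; simp; ring
  have habs2 : ∀ ω:ℝ, ‖(ω:ℂ)+I*z‖ = Real.sqrt ((ω-z.im)^2+z.re^2) := by
    intro ω; rw [Complex.norm_def]; congr 1; rw [Complex.normSq_apply]; simp; ring
  have hr := ratio_tendsto (-w.im) w.re z.im z.re (ne_of_gt hz) hl hne
  have hsq : Tendsto (fun ω:ℝ => Real.sqrt (((ω-(-w.im))^2+w.re^2)/((ω-z.im)^2+z.re^2)))
      l (𝓝 1) := by
    have := (Real.continuous_sqrt.tendsto 1).comp hr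
    simpa [Function.comp_def] using this
  have hlog : Tendsto (fun ω:ℝ =>
      Real.log (Real.sqrt (((ω-(-w.im))^2+w.re^2)/((ω-z.im)^2+z.re^2)))) l (𝓝 0) := by
    have := (Real.continuousAt_log one_ne_zero).tendsto.comp hsq
    simpa [Function.comp_def] using this
  apply hlog.congr
  intro ω
  have hN : (0:ℝ) < (ω-(-w.im))^2+w.re^2 := by positivity
  have hD : (0:ℝ) < (ω-z.im)^2+z.re^2 := by positivity
  rw [habs1, habs2, Real.sqrt_div (le_of_lt hN),
    Real.log_div (by positivity) (by positivity)]

lemma logdiff_top (z w : ℂ) (hz : 0 < z.re) (hw : 0 < w.re) :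
    Tendsto (fun ω:ℝ => Complex.log ((ω:ℂ)-I*w) - Complex.log ((ω:ℂ)+I*z)) atTop (𝓝 0) := by
  have e : ∀ x:ℂ, Complex.log x = (Real.log (‖x‖) : ℂ) + (Complex.arg x)*I :=
    fun x => rfl
  have hre := lognorm_tendsto z w hz hw tendsto_inv_atTop_zero
    (eventually_ne_atTop 0)
  have harg1 : Tendsto (fun ω:ℝ => Complex.arg ((ω:ℂ)-I*w)) atTop (𝓝 0) := by
    have := arg_atTop (-(I*w))
    apply this.congr; intro ω; rw [sub_eq_add_neg]
  have harg2 : Tendsto (fun ω:ℝ => Complex.arg ((ω:ℂ)+I*z)) atTop (𝓝 0) := arg_atTop (I*z)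
  have harg := harg1.sub harg2
  have h1 : Tendsto (fun ω:ℝ => ((Real.log (‖(ω:ℂ)-I*w‖)
      - Real.log (‖(ω:ℂ)+I*z‖) : ℝ) : ℂ)
      + ((Complex.arg ((ω:ℂ)-I*w) - Complex.arg ((ω:ℂ)+I*z) : ℝ) : ℂ)*I) atTop
      (𝓝 (((0:ℝ):ℂ) + ((0 - 0 : ℝ):ℂ)*I)) :=
    ((Complex.continuous_ofReal.tendsto _).comp hre).add
      (((Complex.continuous_ofReal.tendsto _).comp harg).mul_const I)
  rw [show (((0:ℝ):ℂ) + ((0 - 0 : ℝ):ℂ)*I) = 0 by push_cast; ring] at h1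
  apply h1.congr
  intro ω
  rw [e, e]; push_cast; ring

lemma logdiff_bot (z w : ℂ) (hz : 0 < z.re) (hw : 0 < w.re) :
    Tendsto (fun ω:ℝ => Complex.log ((ω:ℂ)-I*w) - Complex.log ((ω:ℂ)+I*z)) atBot
      (𝓝 (-(2*Real.pi)*I)) := by
  have e : ∀ x:ℂ, Complex.log x = (Real.log (‖x‖) : ℂ) + (Complex.arg x)*I :=
    fun x => rfl
  have hre := lognorm_tendsto z w hz hw inv_atBot (eventually_ne_atBot 0)
  have harg1 : Tendsto (fun ω:ℝ => Complex.arg ((ω:ℂ)-I*w)) atBot (𝓝 (-Real.pi)) := by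
    have := arg_atBot_neg (-(I*w)) (by simpa using hw)
    apply this.congr; intro ω; rw [sub_eq_add_neg]
  have harg2 : Tendsto (fun ω:ℝ => Complex.arg ((ω:ℂ)+I*z)) atBot (𝓝 Real.pi) :=
    arg_atBot_pos (I*z) (by simpa using hz)
  have harg := harg1.sub harg2
  have h1 : Tendsto (fun ω:ℝ => ((Real.log (‖(ω:ℂ)-I*w‖)
      - Real.log (‖(ω:ℂ)+I*z‖) : ℝ) : ℂ)
      + ((Complex.arg ((ω:ℂ)-I*w) - Complex.arg ((ω:ℂ)+I*z) : ℝ) : ℂ)*I) atBot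
      (𝓝 (((0:ℝ):ℂ) + ((-Real.pi - Real.pi : ℝ):ℂ)*I)) :=
    ((Complex.continuous_ofReal.tendsto _).comp hre).add
      (((Complex.continuous_ofReal.tendsto _).comp harg).mul_const I)
  rw [show (((0:ℝ):ℂ) + ((-Real.pi - Real.pi : ℝ):ℂ)*I) = -(2*Real.pi)*I by push_cast; ring] at h1
  apply h1.congr
  intro ω
  rw [e, e]; push_cast; ring

lemma key_integral (z w : ℂ) (hz : 0 < z.re) (hw : 0 < w.re) :
    ∫ ω:ℝ, (((ω:ℂ)+I*z)*((ω:ℂ)-I*w))⁻¹ = 2*Real.pi/(z+w) := by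
  have hzw : z + w ≠ 0 := by
    intro h
    have := congrArg Complex.re h
    simp at this; linarith
  have hI : I*(z+w) ≠ 0 := mul_ne_zero Complex.I_ne_zero hzw
  have hderiv : ∀ ω:ℝ, HasDerivAt (fun ω:ℝ =>
      (I*(z+w))⁻¹ * (Complex.log ((ω:ℂ) - I*w) - Complex.log ((ω:ℂ) + I*z)))
      ((((ω:ℂ)+I*z)*((ω:ℂ)-I*w))⁻¹) ω := by
    intro ω
    have ha := ne_add z hz ω
    have hb := ne_sub w hw ω
    have m1 : ((ω:ℂ) - I*w) ∈ Complex.slitPlane :=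
      Complex.mem_slitPlane_iff.2 (Or.inr (by simp; linarith))
    have m2 : ((ω:ℂ) + I*z) ∈ Complex.slitPlane :=
      Complex.mem_slitPlane_iff.2 (Or.inr (by simp; linarith))
    have d1 : HasDerivAt (fun y:ℝ => Complex.log ((y:ℂ) - I*w)) (((ω:ℂ)-I*w)⁻¹) ω := by
      have h0 : HasDerivAt (fun u:ℂ => u - I*w) 1 (ω:ℂ) := (hasDerivAt_id _).sub_const _
      have := (Complex.hasDerivAt_log m1).comp (ω:ℂ) h0
      simpa using this.comp_ofReal
    have d2 : HasDerivAt (fun y:ℝ => Complex.log ((y:ℂ) + I*z)) (((ω:ℂ)+I*z)⁻¹) ω := by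
      have h0 : HasDerivAt (fun u:ℂ => u + I*z) 1 (ω:ℂ) := (hasDerivAt_id _).add_const _
      have := (Complex.hasDerivAt_log m2).comp (ω:ℂ) h0
      simpa using this.comp_ofReal
    have hd := (d1.sub d2).const_mul ((I*(z+w))⁻¹)
    refine hd.congr_deriv ?_
    rw [inv_sub_inv hb ha, show ((ω:ℂ)+I*z) - ((ω:ℂ)-I*w) = I*(z+w) by ring, div_eq_mul_inv,
      ← mul_assoc, inv_mul_cancel₀ hI, one_mul]
    ring
  have htop : Tendsto (fun ω:ℝ =>
      (I*(z+w))⁻¹ * (Complex.log ((ω:ℂ) - I*w) - Complex.log ((ω:ℂ) + I*z))) atTop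
      (𝓝 ((I*(z+w))⁻¹ * 0)) := Tendsto.const_mul _ (logdiff_top z w hz hw)
  rw [mul_zero] at htop
  have hbot : Tendsto (fun ω:ℝ =>
      (I*(z+w))⁻¹ * (Complex.log ((ω:ℂ) - I*w) - Complex.log ((ω:ℂ) + I*z))) atBot
      (𝓝 ((I*(z+w))⁻¹ * (-(2*Real.pi)*I))) := Tendsto.const_mul _ (logdiff_bot z w hz hw)
  have e : (I*(z+w))⁻¹ * (-(2*Real.pi)*I) = -(2*Real.pi/(z+w)) := by
    field_simp
  rw [e] at hbot
  rw [MeasureTheory.integral_of_hasDerivAt_of_tendsto hderiv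
    (integrable_kernel z w hz hw) hbot htop]
  ring

theorem l2_norm_of_sum_of_simple_poles
    (n : ℕ) (z : Fin n → ℂ) (hz : ∀ i, 0 < (z i).re) (c : Fin n → ℂ)
    (hL2 : MemLp (fun ω : ℝ => ∑ i, c i / (Complex.I * ω - z i)) 2 volume) :
    (((1 / (2 * Real.pi)) * ∫ ω : ℝ, ‖∑ i, c i / (Complex.I * ω - z i)‖ ^ 2 : ℝ) : ℂ) =
      ∑ i, ∑ j, c i * star (c j) / (z i + star (z j)) := by
  have hπ : ((2*Real.pi : ℝ) : ℂ) ≠ 0 := by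
    simp [Real.pi_ne_zero]
  have hconj_re : ∀ j, 0 < ((starRingEnd ℂ) (z j)).re := fun j => by
    simpa using hz j
  -- pointwise expansion
  have key : ∀ ω:ℝ, ((‖∑ i, c i / (Complex.I * ω - z i)‖ ^ 2 : ℝ) : ℂ)
      = ∑ i, ∑ j, (c i * (starRingEnd ℂ) (c j)) *
        (((ω:ℂ)+I*(z i))*((ω:ℂ)-I*((starRingEnd ℂ) (z j))))⁻¹ := by
    intro ω
    have h1 : ((‖∑ i, c i / (Complex.I * ω - z i)‖ ^ 2 : ℝ) : ℂ)
        = (∑ i, c i / (Complex.I * ω - z i)) *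
          (starRingEnd ℂ) (∑ j, c j / (Complex.I * ω - z j)) := by
      rw [Complex.mul_conj, Complex.normSq_eq_norm_sq]
    rw [h1, map_sum, Finset.sum_mul_sum]
    apply Finset.sum_congr rfl; intro i _
    apply Finset.sum_congr rfl; intro j _
    rw [map_div₀]
    have hcd : (starRingEnd ℂ) (Complex.I * ω - z j) = -(Complex.I * ω) - (starRingEnd ℂ) (z j) := by
      simp [map_sub, map_mul, Complex.conj_I, Complex.conj_ofReal]
    rw [hcd]
    have hden : (Complex.I * ω - z i) * (-(Complex.I * ω) - (starRingEnd ℂ) (z j))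
        = ((ω:ℂ)+I*(z i))*((ω:ℂ)-I*((starRingEnd ℂ) (z j))) := by
      linear_combination (z i * (starRingEnd ℂ) (z j) - (ω:ℂ)^2) * Complex.I_sq
    rw [div_mul_div_comm, hden, div_eq_mul_inv]
  calc (((1 / (2 * Real.pi)) * ∫ ω : ℝ, ‖∑ i, c i / (Complex.I * ω - z i)‖ ^ 2 : ℝ) : ℂ)
      = (((2*Real.pi : ℝ):ℂ))⁻¹ * ((∫ ω : ℝ, ‖∑ i, c i / (Complex.I * ω - z i)‖ ^ 2 : ℝ) : ℂ) := by
        push_cast; ring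
    _ = (((2*Real.pi : ℝ):ℂ))⁻¹ * ∫ ω : ℝ, ((‖∑ i, c i / (Complex.I * ω - z i)‖ ^ 2 : ℝ) : ℂ) := by
        congr 1
        exact (integral_ofReal (𝕜 := ℂ)).symm
    _ = (((2*Real.pi : ℝ):ℂ))⁻¹ * ∫ ω : ℝ, ∑ i, ∑ j, (c i * (starRingEnd ℂ) (c j)) *
        (((ω:ℂ)+I*(z i))*((ω:ℂ)-I*((starRingEnd ℂ) (z j))))⁻¹ := by
        congr 1
        exact integral_congr_ae (Filter.Eventually.of_forall key)
    _ = (((2*Real.pi : ℝ):ℂ))⁻¹ * ∑ i, ∑ j, (c i * (starRingEnd ℂ) (c j)) *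
        (2*Real.pi/(z i + (starRingEnd ℂ) (z j))) := by
        congr 1
        rw [MeasureTheory.integral_finset_sum]
        · apply Finset.sum_congr rfl; intro i _
          rw [MeasureTheory.integral_finset_sum]
          · apply Finset.sum_congr rfl; intro j _
            rw [MeasureTheory.integral_const_mul,
              key_integral (z i) ((starRingEnd ℂ) (z j)) (hz i) (hconj_re j)]
          · intro j _
            exact (integrable_kernel (z i) ((starRingEnd ℂ) (z j)) (hz i) (hconj_re j)).const_mul _
        · intro i _
          apply MeasureTheory.integrable_finset_sum
          intro j _
          exact (integrable_kernel (z i) ((starRingEnd ℂ) (z j)) (hz i) (hconj_re j)).const_mul _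
    _ = ∑ i, ∑ j, c i * star (c j) / (z i + star (z j)) := by
        rw [Finset.mul_sum]
        apply Finset.sum_congr rfl; intro i _
        rw [Finset.mul_sum]
        apply Finset.sum_congr rfl; intro j _
        have hstar : star (c j) = (starRingEnd ℂ) (c j) := rfl
        have hstar2 : star (z j) = (starRingEnd ℂ) (z j) := rfl
        rw [hstar, hstar2]
        have e : (((2*Real.pi : ℝ):ℂ))⁻¹ * ((c i * (starRingEnd ℂ) (c j)) *
            (2*Real.pi/(z i + (starRingEnd ℂ) (z j))))
            = c i * (starRingEnd ℂ) (c j) * (z i + (starRingEnd ℂ) (z j))⁻¹ *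
              (((2*Real.pi : ℝ):ℂ) * (((2*Real.pi : ℝ):ℂ))⁻¹) := by
          push_cast; ring
        rw [e, mul_inv_cancel₀ hπ, mul_one, ← div_eq_mul_inv]
end

section
/- For complex numbers z, w with Re(z) > 0, Re(w) > 0 and positive integers d, k, one has (1/(2π)) ∫_{-∞}^{∞} (iω - z)^{-d} · conj((iω - w)^{-k}) dω = ((-1)^{k-1}/(d-1)!) · (d/ds)^{d-1} [ (s + conj(w))^{-k} ] evaluated at s = z. -/
open Complex MeasureTheory Filter

lemma aux_normsq (z : ℂ) (ω : ℝ) : ‖Complex.I * ω - z‖^2 = z.re^2 + (ω - z.im)^2 := by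
  rw [Complex.sq_norm, Complex.normSq_apply]
  simp
  ring

lemma aux_ne (z : ℂ) (hz : 0 < z.re) (ω : ℝ) : Complex.I * ω - z ≠ 0 := by
  intro h
  have := congrArg Complex.re h
  simp at this
  linarith

lemma fac_lb (z : ℂ) (ε M : ℝ) (hε : 0 < ε) (h1 : ε ≤ z.re) (h2 : |z.im| ≤ M) (ω : ℝ) :
    Real.sqrt (min (ε^2) 1 / (2+2*M^2)) * Real.sqrt (1+ω^2) ≤ ‖Complex.I * ω - z‖ := by
  have hM : 0 ≤ M := le_trans (abs_nonneg _) h2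
  have key : min (ε^2) 1 / (2+2*M^2) * (1+ω^2) ≤ ‖Complex.I * ω - z‖^2 := by
    rw [aux_normsq]
    rw [div_mul_eq_mul_div, div_le_iff₀ (by positivity)]
    have ha := abs_le.mp h2
    have h4 : ε^2 ≤ z.re^2 := by nlinarith
    have h5 : min (ε^2) 1 ≤ ε^2 := min_le_left _ _
    have h6 : min (ε^2) 1 ≤ 1 := min_le_right _ _
    have h7 : 0 ≤ min (ε^2) 1 := le_min (by positivity) one_pos.le
    have key1 : 1+ω^2 ≤ (2+2*M^2) * (1+(ω-z.im)^2) := by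
      nlinarith [sq_nonneg (ω - 2*z.im), sq_nonneg (ω-z.im), mul_nonneg (by nlinarith : (0:ℝ) ≤ M^2 - z.im^2) (sq_nonneg (ω-z.im))]
    have key2 : min (ε^2) 1 * (1+(ω-z.im)^2) ≤ z.re^2 + (ω-z.im)^2 := by
      nlinarith [mul_le_mul_of_nonneg_right h6 (sq_nonneg (ω-z.im))]
    calc min (ε^2) 1 * (1+ω^2) ≤ min (ε^2) 1 * ((2+2*M^2) * (1+(ω-z.im)^2)) :=
          mul_le_mul_of_nonneg_left key1 h7
      _ = (2+2*M^2) * (min (ε^2) 1 * (1+(ω-z.im)^2)) := by ring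
      _ ≤ (2+2*M^2) * (z.re^2 + (ω-z.im)^2) := mul_le_mul_of_nonneg_left key2 (by positivity)
      _ = (z.re^2 + (ω-z.im)^2) * (2+2*M^2) := by ring
  calc Real.sqrt (min (ε^2) 1 / (2+2*M^2)) * Real.sqrt (1+ω^2)
      = Real.sqrt (min (ε^2) 1 / (2+2*M^2) * (1+ω^2)) := by
        rw [Real.sqrt_mul (by positivity)]
    _ ≤ Real.sqrt (‖Complex.I * ω - z‖^2) := Real.sqrt_le_sqrt key
    _ = ‖Complex.I * ω - z‖ := Real.sqrt_sq (norm_nonneg _)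

/-- Uniform lower bound over a closed ball in the right half plane. -/
lemma ball_lb (z₀ : ℂ) (hz : 0 < z₀.re) :
    ∃ c, 0 < c ∧ c ≤ 1 ∧ ∀ z ∈ Metric.closedBall z₀ (z₀.re/2), ∀ ω : ℝ,
      c * Real.sqrt (1+ω^2) ≤ ‖Complex.I * ω - z‖ := by
  set ε := z₀.re/2 with hε
  set M := |z₀.im| + z₀.re/2 with hM
  have hε0 : 0 < ε := by positivity
  refine ⟨min (Real.sqrt (min (ε^2) 1 / (2+2*M^2))) 1, ?_, min_le_right _ _, ?_⟩
  · apply lt_min _ one_pos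
    positivity
  · intro z hzball ω
    have hd : ‖z - z₀‖ ≤ z₀.re/2 := by
      simpa [Complex.dist_eq, Metric.mem_closedBall] using hzball
    have hre : ε ≤ z.re := by
      have := (Complex.abs_re_le_norm (z - z₀))
      simp only [Complex.sub_re] at this
      have h2 := abs_le.mp (le_trans this hd)
      simp only [hε]; linarith [h2.1]
    have him : |z.im| ≤ M := by
      have := (Complex.abs_im_le_norm (z - z₀))
      simp only [Complex.sub_im] at this
      have h2 := abs_le.mp (le_trans this hd)
      rw [hM]
      rcases abs_le.mp (le_refl |z₀.im|) with ⟨ha, hb⟩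
      rw [abs_le]; constructor <;> nlinarith [abs_nonneg z₀.im, le_abs_self z₀.im, neg_abs_le z₀.im]
    calc min (Real.sqrt (min (ε^2) 1 / (2+2*M^2))) 1 * Real.sqrt (1+ω^2)
        ≤ Real.sqrt (min (ε^2) 1 / (2+2*M^2)) * Real.sqrt (1+ω^2) := by
          apply mul_le_mul_of_nonneg_right (min_le_left _ _) (Real.sqrt_nonneg _)
      _ ≤ ‖Complex.I * ω - z‖ := fac_lb z ε M hε0 hre him ω

/-- The second factor: `-(I ω) - b` rewritten. -/
lemma neg_form (b : ℂ) (ω : ℝ) : -(Complex.I * ω) - b = Complex.I * ((-ω : ℝ) : ℂ) - b := by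
  push_cast; ring

lemma single_lb (b : ℂ) (hb : 0 < b.re) :
    ∃ c, 0 < c ∧ c ≤ 1 ∧ ∀ ω : ℝ, c * Real.sqrt (1+ω^2) ≤ ‖-(Complex.I * ω) - b‖ := by
  obtain ⟨c, hc0, hc1, h⟩ := ball_lb b hb
  refine ⟨c, hc0, hc1, fun ω => ?_⟩
  rw [neg_form]
  have := h b (Metric.mem_closedBall_self (by positivity)) (-ω)
  simpa using this

/-- Power bound: if `c √(1+ω²) ≤ ‖ξ‖` with `c ≤ 1`, then `‖(ξ^(p+1))⁻¹‖ ≤ (c^(p+1))⁻¹ (√(1+ω²))⁻¹`. -/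
lemma pow_inv_bound (c : ℝ) (hc0 : 0 < c) (hc1 : c ≤ 1) (ξ : ℂ) (ω : ℝ) (p : ℕ)
    (h : c * Real.sqrt (1+ω^2) ≤ ‖ξ‖) :
    ‖(ξ^(p+1))⁻¹‖ ≤ (c^(p+1))⁻¹ * (Real.sqrt (1+ω^2))⁻¹ := by
  have hs1 : (1:ℝ) ≤ Real.sqrt (1+ω^2) := by
    nlinarith [Real.sq_sqrt (show (0:ℝ) ≤ 1+ω^2 by positivity), Real.sqrt_nonneg (1+ω^2), sq_nonneg ω]
  have hs0 : 0 < Real.sqrt (1+ω^2) := lt_of_lt_of_le one_pos hs1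
  have hξ : 0 < ‖ξ‖ := lt_of_lt_of_le (by positivity) h
  rw [norm_inv, norm_pow]
  rw [← mul_inv]
  apply inv_anti₀ (by positivity)
  calc c^(p+1) * Real.sqrt (1+ω^2) ≤ (c * Real.sqrt (1+ω^2))^(p+1) := by
        rw [mul_pow]
        apply mul_le_mul_of_nonneg_left _ (by positivity)
        calc Real.sqrt (1+ω^2) = Real.sqrt (1+ω^2) ^ 1 := (pow_one _).symm
          _ ≤ Real.sqrt (1+ω^2) ^ (p+1) := pow_le_pow_right₀ hs1 (by omega)
    _ ≤ ‖ξ‖^(p+1) := pow_le_pow_left₀ (by positivity) h _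

/-- Domination of the integrand, uniform over the ball. -/
lemma dominate (z₀ : ℂ) (hz : 0 < z₀.re) (b : ℂ) (hb : 0 < b.re) (p q : ℕ) :
    ∃ K, 0 < K ∧ ∀ z ∈ Metric.closedBall z₀ (z₀.re/2), ∀ ω : ℝ,
      ‖((Complex.I * ω - z)^(p+1))⁻¹ * ((-(Complex.I * ω) - b)^(q+1))⁻¹‖ ≤ K * (1+ω^2)⁻¹ := by
  obtain ⟨c₁, hc₁0, hc₁1, h₁⟩ := ball_lb z₀ hz
  obtain ⟨c₂, hc₂0, hc₂1, h₂⟩ := single_lb b hb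
  refine ⟨(c₁^(p+1))⁻¹ * (c₂^(q+1))⁻¹, by positivity, fun z hzb ω => ?_⟩
  have hs : 0 < Real.sqrt (1+ω^2) := Real.sqrt_pos.mpr (by positivity)
  rw [norm_mul]
  calc ‖((Complex.I * ω - z)^(p+1))⁻¹‖ * ‖((-(Complex.I * ω) - b)^(q+1))⁻¹‖
      ≤ ((c₁^(p+1))⁻¹ * (Real.sqrt (1+ω^2))⁻¹) * ((c₂^(q+1))⁻¹ * (Real.sqrt (1+ω^2))⁻¹) := by
        apply mul_le_mul (pow_inv_bound c₁ hc₁0 hc₁1 _ ω p (h₁ z hzb ω))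
          (pow_inv_bound c₂ hc₂0 hc₂1 _ ω q (h₂ ω)) (norm_nonneg _) (by positivity)
    _ = (c₁^(p+1))⁻¹ * (c₂^(q+1))⁻¹ * (Real.sqrt (1+ω^2) * Real.sqrt (1+ω^2))⁻¹ := by
        rw [mul_inv]; ring
    _ = (c₁^(p+1))⁻¹ * (c₂^(q+1))⁻¹ * (1+ω^2)⁻¹ := by
        rw [Real.mul_self_sqrt (by positivity)]

lemma integrand_continuous (z b : ℂ) (hz : 0 < z.re) (hb : 0 < b.re) (p q : ℕ) :
    Continuous (fun ω : ℝ => ((Complex.I * ω - z)^(p+1))⁻¹ * ((-(Complex.I * ω) - b)^(q+1))⁻¹) := by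
  apply Continuous.mul
  · apply Continuous.inv₀
    · exact ((continuous_const.mul Complex.continuous_ofReal).sub continuous_const).pow _
    · exact fun ω => pow_ne_zero _ (aux_ne z hz ω)
  · apply Continuous.inv₀
    · exact (((continuous_const.mul Complex.continuous_ofReal).neg).sub continuous_const).pow _
    · intro ω
      apply pow_ne_zero
      rw [neg_form]
      exact aux_ne b hb (-ω)

lemma integrand_integrable (z b : ℂ) (hz : 0 < z.re) (hb : 0 < b.re) (p q : ℕ) :
    Integrable (fun ω : ℝ => ((Complex.I * ω - z)^(p+1))⁻¹ * ((-(Complex.I * ω) - b)^(q+1))⁻¹) := by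
  obtain ⟨K, hK, h⟩ := dominate z hz b hb p q
  apply Integrable.mono (integrable_inv_one_add_sq.const_mul K)
    ((integrand_continuous z b hz hb p q).aestronglyMeasurable)
  apply ae_of_all
  intro ω
  have := h z (Metric.mem_closedBall_self (by positivity)) ω
  exact le_trans this (le_abs_self _)

/-- Limit of log differences. -/
lemma log_diff_tendsto (v : ℂ) (hv : 0 < v.re) :
    Tendsto (fun R : ℝ => Complex.log (v - Complex.I * R) - Complex.log (v + Complex.I * R))
      atTop (nhds (-(Real.pi : ℂ) * Complex.I)) := by
  have key : (fun R : ℝ => Complex.log (v - Complex.I * R) - Complex.log (v + Complex.I * R))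
      =ᶠ[atTop] (fun R : ℝ => Complex.log (v / R - Complex.I) - Complex.log (v / R + Complex.I)) := by
    filter_upwards [eventually_gt_atTop (0:ℝ)] with R hR
    have hR' : (R:ℂ) ≠ 0 := by exact_mod_cast hR.ne'
    have h1 : v - Complex.I * R = (R : ℂ) * (v / R - Complex.I) := by
      field_simp; try ring
    have h2 : v + Complex.I * R = (R : ℂ) * (v / R + Complex.I) := by
      field_simp; try ring
    have hpos : 0 < (v / (R:ℂ)).re := by
      rw [Complex.div_ofReal_re]
      positivity
    have hn1 : v / R - Complex.I ≠ 0 := by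
      intro h
      have h2 := congrArg Complex.re h
      simp only [Complex.sub_re, Complex.I_re, Complex.zero_re, sub_zero] at h2
      rw [h2] at hpos; simp at hpos
    have hn2 : v / R + Complex.I ≠ 0 := by
      intro h
      have h2 := congrArg Complex.re h
      simp only [Complex.add_re, Complex.I_re, Complex.zero_re, add_zero] at h2
      rw [h2] at hpos; simp at hpos
    rw [h1, h2, Complex.log_ofReal_mul hR hn1, Complex.log_ofReal_mul hR hn2]
    ring
  have hlim : Tendsto (fun R : ℝ => v / (R:ℂ)) atTop (nhds 0) := by
    have h1 : Tendsto (fun R : ℝ => ((R⁻¹ : ℝ) : ℂ)) atTop (nhds ((0:ℝ):ℂ)) :=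
      (Complex.continuous_ofReal.tendsto 0).comp tendsto_inv_atTop_zero
    have h2 : Tendsto (fun R : ℝ => v * ((R⁻¹ : ℝ) : ℂ)) atTop (nhds (v * 0)) := h1.const_mul v
    simp only [mul_zero] at h2
    convert h2 using 2 with R
    push_cast; ring
  have hI : Tendsto (fun R : ℝ => Complex.log (v / R - Complex.I)) atTop (nhds (Complex.log (-Complex.I))) := by
    have hcont : ContinuousAt Complex.log (-Complex.I) := by
      apply continuousAt_clog
      rw [Complex.mem_slitPlane_iff]
      right; simp
    have : Tendsto (fun R : ℝ => v / (R:ℂ) - Complex.I) atTop (nhds (0 - Complex.I)) :=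
      hlim.sub_const Complex.I
    simp only [zero_sub] at this
    exact hcont.tendsto.comp this
  have hI2 : Tendsto (fun R : ℝ => Complex.log (v / R + Complex.I)) atTop (nhds (Complex.log Complex.I)) := by
    have hcont : ContinuousAt Complex.log Complex.I := by
      apply continuousAt_clog
      rw [Complex.mem_slitPlane_iff]
      right; simp
    have : Tendsto (fun R : ℝ => v / (R:ℂ) + Complex.I) atTop (nhds (0 + Complex.I)) :=
      hlim.add_const Complex.I
    simp only [zero_add] at this
    exact hcont.tendsto.comp this
  have := (hI.sub hI2).congr' key.symm
  convert this using 2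
  rw [Complex.log_neg_I, Complex.log_I]
  ring

lemma base_ne1 (z : ℂ) (hz : 0 < z.re) (ω : ℝ) : z - Complex.I * ω ≠ 0 := by
  intro h
  have := congrArg Complex.re h
  simp at this
  linarith

lemma base_ne2 (b : ℂ) (hb : 0 < b.re) (ω : ℝ) : b + Complex.I * ω ≠ 0 := by
  intro h
  have := congrArg Complex.re h
  simp at this
  linarith

lemma sum_ne (z b : ℂ) (hz : 0 < z.re) (hb : 0 < b.re) : z + b ≠ 0 := by
  intro h
  have := congrArg Complex.re h
  simp at this
  linarith

lemma base_hasDeriv (z b : ℂ) (hz : 0 < z.re) (hb : 0 < b.re) (ω : ℝ) :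
    HasDerivAt (fun ω : ℝ => (z+b)⁻¹ *
        (Complex.I * Complex.log (z - Complex.I * ω) - Complex.I * Complex.log (b + Complex.I * ω)))
      ((Complex.I * ω - z)⁻¹ * (-(Complex.I * ω) - b)⁻¹) ω := by
  have hid : HasDerivAt (fun ω : ℝ => ((ω : ℝ) : ℂ)) 1 ω := by
    have h := (hasDerivAt_id ω).ofReal_comp
    rw [Complex.ofReal_one] at h
    exact h
  have h1 : HasDerivAt (fun ω : ℝ => z - Complex.I * ω) (-Complex.I) ω := by
    simpa using ((hid.const_mul Complex.I)).const_sub z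
  have h2 : HasDerivAt (fun ω : ℝ => b + Complex.I * ω) Complex.I ω := by
    simpa using ((hid.const_mul Complex.I)).const_add b
  have hl1 : HasDerivAt (fun ω : ℝ => Complex.log (z - Complex.I * ω))
      (-Complex.I / (z - Complex.I * ω)) ω := by
    apply h1.clog_real
    rw [Complex.mem_slitPlane_iff]
    left; simpa using hz
  have hl2 : HasDerivAt (fun ω : ℝ => Complex.log (b + Complex.I * ω))
      (Complex.I / (b + Complex.I * ω)) ω := by
    apply h2.clog_real
    rw [Complex.mem_slitPlane_iff]
    left; simpa using hb
  have := (((hl1.const_mul Complex.I).sub (hl2.const_mul Complex.I)).const_mul (z+b)⁻¹)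
  refine this.congr_deriv ?_
  symm
  have n1 := base_ne1 z hz ω
  have n2 := base_ne2 b hb ω
  have n3 := sum_ne z b hz hb
  have e1 : Complex.I * ω - z = -(z - Complex.I * ω) := by ring
  have e2 : -(Complex.I * ω) - b = -(b + Complex.I * ω) := by ring
  rw [e1, e2, inv_neg, inv_neg, neg_mul_neg]
  have hX : Complex.I * (-Complex.I / (z - Complex.I * ω)) - Complex.I * (Complex.I / (b + Complex.I * ω))
      = (z - Complex.I * ω)⁻¹ + (b + Complex.I * ω)⁻¹ := by
    rw [div_eq_mul_inv, div_eq_mul_inv]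
    have h := Complex.I_mul_I
    calc Complex.I * (-Complex.I * (z - Complex.I * ω)⁻¹) - Complex.I * (Complex.I * (b + Complex.I * ω)⁻¹)
        = -(Complex.I*Complex.I) * (z - Complex.I * ω)⁻¹ - (Complex.I*Complex.I) * (b + Complex.I * ω)⁻¹ := by ring
      _ = (z - Complex.I * ω)⁻¹ + (b + Complex.I * ω)⁻¹ := by rw [h]; ring
  rw [hX]
  have hXY : (z - Complex.I * ω) + (b + Complex.I * ω) = z + b := by ring
  rw [inv_add_inv n1 n2, hXY, div_eq_mul_inv, ← mul_assoc, inv_mul_cancel₀ n3, one_mul, mul_inv]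

lemma base_integral (z b : ℂ) (hz : 0 < z.re) (hb : 0 < b.re) :
    (∫ ω : ℝ, ((Complex.I * ω - z)^(0+1))⁻¹ * ((-(Complex.I * ω) - b)^(0+1))⁻¹)
      = 2*(Real.pi:ℂ)*(-1)^(0+0) * (∏ i ∈ Finset.range 0, ((0:ℕ)+1+i:ℂ)) / ((0:ℕ).factorial : ℂ)
        * ((z+b)^(0+0+1))⁻¹ := by
  simp only [pow_one, Finset.range_zero, Finset.prod_empty, Nat.factorial_zero, Nat.cast_one,
    pow_zero, mul_one, div_one, zero_add]
  have hint : Integrable (fun ω : ℝ => (Complex.I * ω - z)⁻¹ * (-(Complex.I * ω) - b)⁻¹) := by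
    have := integrand_integrable z b hz hb 0 0
    simpa using this
  set F : ℝ → ℂ := fun ω => (z+b)⁻¹ *
    (Complex.I * Complex.log (z - Complex.I * ω) - Complex.I * Complex.log (b + Complex.I * ω)) with hF
  have hderiv : ∀ ω : ℝ, HasDerivAt F ((Complex.I * ω - z)⁻¹ * (-(Complex.I * ω) - b)⁻¹) ω :=
    fun ω => base_hasDeriv z b hz hb ω
  have hsub : ∀ R : ℝ, (∫ ω in (-R)..R, (Complex.I * ω - z)⁻¹ * (-(Complex.I * ω) - b)⁻¹)
      = F R - F (-R) := by
    intro R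
    apply intervalIntegral.integral_eq_sub_of_hasDerivAt (fun x _ => hderiv x)
    exact hint.intervalIntegrable
  have T1 := log_diff_tendsto z hz
  have T2 := log_diff_tendsto b hb
  have Tg : Tendsto (fun R : ℝ => F R - F (-R)) atTop (nhds (2*(Real.pi:ℂ)*(z+b)⁻¹)) := by
    have T3 := (T1.sub T2.neg).const_mul ((z+b)⁻¹ * Complex.I)
    have heq : (fun R : ℝ => (z+b)⁻¹ * Complex.I *
        ((Complex.log (z - Complex.I * R) - Complex.log (z + Complex.I * R)) -
          -(Complex.log (b - Complex.I * R) - Complex.log (b + Complex.I * R))))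
        = fun R : ℝ => F R - F (-R) := by
      funext R
      simp only [hF]
      push_cast
      ring_nf
    rw [heq] at T3
    convert T3 using 2
    ring_nf
    simp only [Complex.I_sq]
    ring
  have Tint : Tendsto (fun R : ℝ => ∫ ω in (-R)..R, (Complex.I * ω - z)⁻¹ * (-(Complex.I * ω) - b)⁻¹)
      atTop (nhds (∫ ω : ℝ, (Complex.I * ω - z)⁻¹ * (-(Complex.I * ω) - b)⁻¹)) :=
    intervalIntegral_tendsto_integral hint tendsto_neg_atTop_atBot tendsto_id
  have Tint' : Tendsto (fun R : ℝ => F R - F (-R)) atTop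
      (nhds (∫ ω : ℝ, (Complex.I * ω - z)⁻¹ * (-(Complex.I * ω) - b)⁻¹)) := by
    apply Tint.congr
    intro R
    exact hsub R
  exact (tendsto_nhds_unique Tint' Tg)

/-- Derivative in z of `((I ω - z)^(p+1))⁻¹`. -/
lemma pow_inv_hasDeriv (p : ℕ) (ω : ℝ) (z : ℂ) (hne : Complex.I * ω - z ≠ 0) :
    HasDerivAt (fun z : ℂ => ((Complex.I * ω - z)^(p+1))⁻¹)
      ((p+1 : ℂ) * ((Complex.I * ω - z)^(p+2))⁻¹) z := by
  have h1 : HasDerivAt (fun z : ℂ => Complex.I * ω - z) (-1) z := by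
    simpa using (hasDerivAt_id z).const_sub (Complex.I * ω)
  have h2 : HasDerivAt (fun z : ℂ => (Complex.I * ω - z)^(p+1))
      (((p:ℂ)+1) * (Complex.I * ω - z)^p * (-1)) z := by
    have := h1.fun_pow (p+1)
    simpa using this
  have h3 := h2.inv (pow_ne_zero _ hne)
  refine h3.congr_deriv ?_
  symm
  rw [show ((Complex.I * ω - z)^(p+1))^2 = (Complex.I * ω - z)^(2*p+2) by ring]
  have key : ((Complex.I * ω - z)^(p+2))⁻¹ = (Complex.I * ω - z)^p * ((Complex.I * ω - z)^(2*p+2))⁻¹ := by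
    rw [eq_comm, mul_inv_eq_iff_eq_mul₀ (pow_ne_zero _ hne), inv_mul_eq_div, eq_div_iff (pow_ne_zero _ hne)]
    ring
  rw [key]
  push_cast
  ring

/-- The inductive step: differentiating under the integral sign. -/
lemma step_lemma (b : ℂ) (hb : 0 < b.re) (m j : ℕ) (c : ℂ)
    (h : ∀ z : ℂ, 0 < z.re →
      (∫ ω : ℝ, ((Complex.I * ω - z)^(m+1))⁻¹ * ((-(Complex.I * ω) - b)^(j+1))⁻¹)
        = c * ((z+b)^(m+j+1))⁻¹) :
    ∀ z : ℂ, 0 < z.re →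
      (∫ ω : ℝ, ((Complex.I * ω - z)^(m+1+1))⁻¹ * ((-(Complex.I * ω) - b)^(j+1))⁻¹)
        = (-(c * (m+j+1)) / (m+1)) * ((z+b)^(m+1+j+1))⁻¹ := by
  intro z₀ hz₀
  obtain ⟨K, hK, hKb⟩ := dominate z₀ hz₀ b hb (m+1) j
  set F : ℂ → ℝ → ℂ := fun z ω => ((Complex.I * ω - z)^(m+1))⁻¹ * ((-(Complex.I * ω) - b)^(j+1))⁻¹
    with hFdef
  set F' : ℂ → ℝ → ℂ := fun z ω =>
    ((m:ℂ)+1) * (((Complex.I * ω - z)^(m+2))⁻¹ * ((-(Complex.I * ω) - b)^(j+1))⁻¹) with hF'def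
  have hball : ∀ z ∈ Metric.ball z₀ (z₀.re/2), 0 < z.re := by
    intro z hz
    have hd : ‖z - z₀‖ < z₀.re/2 := by simpa [Complex.dist_eq, Metric.mem_ball] using hz
    have := Complex.abs_re_le_norm (z - z₀)
    simp only [Complex.sub_re] at this
    have h2 := abs_lt.mp (lt_of_le_of_lt this hd)
    linarith [h2.1]
  rw [show m+1+1 = m+2 from rfl, show m+1+j+1 = m+j+2 by omega]
  rw [show m+1+1 = m+2 from rfl] at hKb
  have key := hasDerivAt_integral_of_dominated_loc_of_deriv_le (μ := volume) (F := F) (F' := F')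
    (x₀ := z₀) (s := Metric.ball z₀ (z₀.re/2)) (bound := fun ω => ((m:ℝ)+1) * (K * (1+ω^2)⁻¹)) (Metric.ball_mem_nhds z₀ (by positivity))
    ?_ ?_ ?_ ?_ ?_ ?_
  · -- use key
    have hD : HasDerivAt (fun z => c * ((z+b)^(m+j+1))⁻¹)
        (c * (-((m:ℂ)+j+1) * ((z₀+b)^(m+j+2))⁻¹)) z₀ := by
      have hne : z₀ + b ≠ 0 := sum_ne z₀ b hz₀ hb
      have h1 : HasDerivAt (fun z : ℂ => z + b) 1 z₀ := by
        simpa using (hasDerivAt_id z₀).add_const b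
      have h2 : HasDerivAt (fun z : ℂ => (z+b)^(m+j+1))
          (((m:ℂ)+j+1) * (z₀+b)^(m+j) * 1) z₀ := by
        have := h1.fun_pow (m+j+1)
        simpa using this
      have h3 := (h2.inv (pow_ne_zero _ hne)).const_mul c
      refine h3.congr_deriv ?_
      symm
      rw [show ((z₀+b)^(m+j+1))^2 = (z₀+b)^(2*(m+j)+2) by ring]
      have key2 : ((z₀+b)^(m+j+2))⁻¹ = (z₀+b)^(m+j) * ((z₀+b)^(2*(m+j)+2))⁻¹ := by
        rw [eq_comm, mul_inv_eq_iff_eq_mul₀ (pow_ne_zero _ hne), inv_mul_eq_div,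
          eq_div_iff (pow_ne_zero _ hne)]
        ring
      rw [key2]
      push_cast
      ring
    -- the integral function agrees with the closed form near z₀
    have heq : (fun z => ∫ ω : ℝ, F z ω) =ᶠ[nhds z₀] (fun z => c * ((z+b)^(m+j+1))⁻¹) := by
      have hopen : IsOpen {z : ℂ | 0 < z.re} := by
        exact isOpen_lt continuous_const Complex.continuous_re
      filter_upwards [hopen.mem_nhds hz₀] with z hz
      exact h z hz
    have hD2 : HasDerivAt (fun z => ∫ ω : ℝ, F z ω)
        (c * (-((m:ℂ)+j+1) * ((z₀+b)^(m+j+2))⁻¹)) z₀ := hD.congr_of_eventuallyEq heq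
    have huniq := key.2.unique hD2
    -- huniq : ∫ F' z₀ = c * ...
    have hsplit : (∫ ω : ℝ, F' z₀ ω) = ((m:ℂ)+1) *
        ∫ ω : ℝ, ((Complex.I * ω - z₀)^(m+2))⁻¹ * ((-(Complex.I * ω) - b)^(j+1))⁻¹ := by
      rw [hF'def]
      exact integral_const_mul _ _
    rw [hsplit] at huniq
    have hm1 : ((m:ℂ)+1) ≠ 0 := by
      have h0 : ((m+1 : ℕ) : ℂ) ≠ 0 := Nat.cast_ne_zero.mpr (Nat.succ_ne_zero m)
      push_cast at h0; exact h0
    have hfin : (∫ ω : ℝ, ((Complex.I * ω - z₀)^(m+2))⁻¹ * ((-(Complex.I * ω) - b)^(j+1))⁻¹)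
        = ((m:ℂ)+1)⁻¹ * (((m:ℂ)+1) *
          ∫ ω : ℝ, ((Complex.I * ω - z₀)^(m+2))⁻¹ * ((-(Complex.I * ω) - b)^(j+1))⁻¹) := by
      rw [← mul_assoc, inv_mul_cancel₀ hm1, one_mul]
    rw [hfin, huniq, div_eq_mul_inv]
    push_cast
    ring
  · -- AEStronglyMeasurable (F z) for z near z₀
    have hopen : IsOpen {z : ℂ | 0 < z.re} := isOpen_lt continuous_const Complex.continuous_re
    filter_upwards [hopen.mem_nhds hz₀] with z hz
    exact ((integrand_continuous z b hz hb m j).aestronglyMeasurable)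
  · exact integrand_integrable z₀ b hz₀ hb m j
  · exact (continuous_const.mul (integrand_continuous z₀ b hz₀ hb (m+1) j)).aestronglyMeasurable
  · -- bound
    apply ae_of_all
    intro ω z hz
    have hz' : z ∈ Metric.closedBall z₀ (z₀.re/2) := Metric.ball_subset_closedBall hz
    have := hKb z hz' ω
    rw [hF'def]
    have hnorm : ‖((m:ℂ)+1)‖ = (m:ℝ)+1 := by
      rw [show ((m:ℂ)+1) = ((m+1:ℕ):ℂ) by push_cast; ring, Complex.norm_natCast]
      push_cast; ring
    rw [norm_mul, hnorm]
    exact mul_le_mul_of_nonneg_left this (by positivity)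
  · exact integrable_inv_one_add_sq.const_mul _ |>.const_mul _
  · -- HasDerivAt
    apply ae_of_all
    intro ω z hz
    have hzre : 0 < z.re := hball z hz
    have hne := aux_ne z hzre ω
    have hd := (pow_inv_hasDeriv m ω z hne).mul_const (((-(Complex.I * ω) - b)^(j+1))⁻¹)
    refine hd.congr_deriv ?_
    symm
    rw [hF'def]
    ring

/-- The case k = 1 (second exponent 1), by induction on m. -/
lemma lemA0 : ∀ (m : ℕ) (b : ℂ), 0 < b.re → ∀ z : ℂ, 0 < z.re →
    (∫ ω : ℝ, ((Complex.I * ω - z)^(m+1))⁻¹ * ((-(Complex.I * ω) - b)^(0+1))⁻¹)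
      = 2*(Real.pi:ℂ)*(-1)^m * ((z+b)^(m+0+1))⁻¹ := by
  intro m
  induction m with
  | zero =>
    intro b hb z hz
    have := base_integral z b hz hb
    simpa using this
  | succ m ih =>
    intro b hb z hz
    have hstep := step_lemma b hb m 0 (2*(Real.pi:ℂ)*(-1)^m) (fun z hz => ih b hb z hz) z hz
    rw [show m+1+1 = m+2 from rfl, show m+1+0+1 = m+0+2 by omega] at hstep
    rw [show m+1+0+1 = m+0+2 by omega]
    rw [hstep]
    have : (-(2*(Real.pi:ℂ)*(-1)^m * (↑m+↑(0:ℕ)+1)) / (↑m+1)) = 2*(Real.pi:ℂ)*(-1)^(m+1) := by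
      have hm1 : ((m:ℂ)+1) ≠ 0 := by
        have h0 : ((m+1 : ℕ) : ℂ) ≠ 0 := Nat.cast_ne_zero.mpr (Nat.succ_ne_zero m)
        push_cast at h0; exact h0
      field_simp
      ring
    rw [← this]

/-- Conjugation symmetry to get the general base case m = 0. -/
lemma lemA_base (n : ℕ) (b : ℂ) (hb : 0 < b.re) (z : ℂ) (hz : 0 < z.re) :
    (∫ ω : ℝ, ((Complex.I * ω - z)^(0+1))⁻¹ * ((-(Complex.I * ω) - b)^(n+1))⁻¹)
      = 2*(Real.pi:ℂ)*(-1)^n * ((z+b)^(n+0+1))⁻¹ := by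
  have hconj : ∀ ω : ℝ, (starRingEnd ℂ) (((Complex.I * ω - (starRingEnd ℂ) b)^(n+1))⁻¹
        * ((-(Complex.I * ω) - (starRingEnd ℂ) z)^(0+1))⁻¹)
      = ((Complex.I * ω - z)^(0+1))⁻¹ * ((-(Complex.I * ω) - b)^(n+1))⁻¹ := by
    intro ω
    rw [map_mul, map_inv₀, map_inv₀, map_pow, map_pow, map_sub, map_sub, map_mul, map_neg, map_mul]
    simp only [Complex.conj_I, Complex.conj_ofReal, Complex.conj_conj]
    ring_nf
  have hbre : 0 < ((starRingEnd ℂ) b).re := by simpa using hb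
  have hzre : 0 < ((starRingEnd ℂ) z).re := by simpa using hz
  have h0 := lemA0 n ((starRingEnd ℂ) z) hzre ((starRingEnd ℂ) b) hbre
  calc (∫ ω : ℝ, ((Complex.I * ω - z)^(0+1))⁻¹ * ((-(Complex.I * ω) - b)^(n+1))⁻¹)
      = ∫ ω : ℝ, (starRingEnd ℂ) (((Complex.I * ω - (starRingEnd ℂ) b)^(n+1))⁻¹
          * ((-(Complex.I * ω) - (starRingEnd ℂ) z)^(0+1))⁻¹) := by
        congr 1; funext ω; rw [hconj]
    _ = (starRingEnd ℂ) (∫ ω : ℝ, ((Complex.I * ω - (starRingEnd ℂ) b)^(n+1))⁻¹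
          * ((-(Complex.I * ω) - (starRingEnd ℂ) z)^(0+1))⁻¹) := integral_conj
    _ = (starRingEnd ℂ) (2*(Real.pi:ℂ)*(-1)^n * (((starRingEnd ℂ) b + (starRingEnd ℂ) z)^(n+0+1))⁻¹) := by
        rw [h0]
    _ = 2*(Real.pi:ℂ)*(-1)^n * ((z+b)^(n+0+1))⁻¹ := by
        have hcst : (starRingEnd ℂ) (2*(Real.pi:ℂ)*(-1)^n) = 2*(Real.pi:ℂ)*(-1)^n := by
          rw [map_mul, map_mul, map_pow]
          simp [Complex.conj_ofReal, map_ofNat]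
        rw [map_mul, map_inv₀, map_pow, map_add, Complex.conj_conj, Complex.conj_conj, hcst,
          add_comm b z]

/-- Main integral formula. -/
lemma lemA : ∀ (m n : ℕ) (b : ℂ), 0 < b.re → ∀ z : ℂ, 0 < z.re →
    (∫ ω : ℝ, ((Complex.I * ω - z)^(m+1))⁻¹ * ((-(Complex.I * ω) - b)^(n+1))⁻¹)
      = 2*(Real.pi:ℂ)*(-1)^(m+n) * (∏ i ∈ Finset.range m, ((n:ℂ)+1+i)) / ((m.factorial : ℂ))
        * ((z+b)^(m+n+1))⁻¹ := by
  intro m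
  induction m with
  | zero =>
    intro n b hb z hz
    have := lemA_base n b hb z hz
    simpa using this
  | succ m ih =>
    intro n b hb z hz
    set c := 2*(Real.pi:ℂ)*(-1)^(m+n) * (∏ i ∈ Finset.range m, ((n:ℂ)+1+i)) / ((m.factorial : ℂ))
      with hc
    have hstep := step_lemma b hb m n c (fun z hz => ih n b hb z hz) z hz
    rw [show m+1+1 = m+2 from rfl] at hstep
    rw [show m+1+n+1 = m+n+2 by omega] at hstep ⊢
    rw [hstep]
    congr 1
    rw [hc]
    have hm1 : ((m:ℂ)+1) ≠ 0 := by
      have h0 : ((m+1 : ℕ) : ℂ) ≠ 0 := Nat.cast_ne_zero.mpr (Nat.succ_ne_zero m)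
      push_cast at h0; exact h0
    have hfact : ((m+1).factorial : ℂ) = ((m:ℂ)+1) * (m.factorial : ℂ) := by
      rw [Nat.factorial_succ]; push_cast; ring
    have hprod : (∏ i ∈ Finset.range (m+1), ((n:ℂ)+1+i)) =
        (∏ i ∈ Finset.range m, ((n:ℂ)+1+i)) * ((n:ℂ)+1+m) := by
      rw [Finset.prod_range_succ]
    have hfne : ((m.factorial : ℂ)) ≠ 0 := Nat.cast_ne_zero.mpr (Nat.factorial_ne_zero m)
    rw [hfact, hprod]
    field_simp
    ring

lemma iterB (n : ℕ) (b : ℂ) : ∀ (m : ℕ) (z : ℂ), z + b ≠ 0 →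
    iteratedDeriv m (fun s : ℂ => ((s+b)^(n+1))⁻¹) z
      = (-1)^m * (∏ i ∈ Finset.range m, ((n:ℂ)+1+i)) * ((z+b)^(n+1+m))⁻¹ := by
  intro m
  induction m with
  | zero =>
    intro z hz
    simp
  | succ m ih =>
    intro z hz
    rw [iteratedDeriv_succ]
    have hopen : IsOpen {s : ℂ | s + b ≠ 0} := by
      have : {s : ℂ | s + b ≠ 0} = (fun s : ℂ => s + b) ⁻¹' {0}ᶜ := by
        ext s; simp [add_eq_zero_iff_eq_neg]
      rw [this]
      exact (isOpen_compl_singleton).preimage (continuous_id.add continuous_const)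
    have heq : iteratedDeriv m (fun s : ℂ => ((s+b)^(n+1))⁻¹)
        =ᶠ[nhds z] (fun s => (-1)^m * (∏ i ∈ Finset.range m, ((n:ℂ)+1+i)) * ((s+b)^(n+1+m))⁻¹) := by
      filter_upwards [hopen.mem_nhds hz] with s hs
      exact ih s hs
    rw [heq.deriv_eq]
    have hd : HasDerivAt (fun s : ℂ => (-1)^m * (∏ i ∈ Finset.range m, ((n:ℂ)+1+i)) * ((s+b)^(n+1+m))⁻¹)
        ((-1)^m * (∏ i ∈ Finset.range m, ((n:ℂ)+1+i)) * (-((n:ℂ)+1+m) * ((z+b)^(n+1+m+1))⁻¹)) z := by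
      have h1 : HasDerivAt (fun s : ℂ => s + b) 1 z := by
        simpa using (hasDerivAt_id z).add_const b
      have h2 : HasDerivAt (fun s : ℂ => (s+b)^(n+1+m))
          (((n:ℂ)+1+m) * (z+b)^(n+m) * 1) z := by
        have h := h1.fun_pow (n+1+m)
        rw [show n+1+m-1 = n+m by omega] at h
        refine h.congr_deriv ?_
        push_cast; ring
      have h3 := (h2.inv (pow_ne_zero _ hz)).const_mul
        ((-1:ℂ)^m * (∏ i ∈ Finset.range m, ((n:ℂ)+1+i)))
      refine h3.congr_deriv ?_
      symm
      rw [show ((z+b)^(n+1+m))^2 = (z+b)^(2*(n+m)+2) by ring]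
      have key2 : ((z+b)^(n+1+m+1))⁻¹ = (z+b)^(n+m) * ((z+b)^(2*(n+m)+2))⁻¹ := by
        rw [eq_comm, mul_inv_eq_iff_eq_mul₀ (pow_ne_zero _ hz), inv_mul_eq_div,
          eq_div_iff (pow_ne_zero _ hz)]
        rw [show n+1+m+1 = (n+m)+2 by omega, show 2*(n+m)+2 = ((n+m)+2)+(n+m) by omega]
        rw [pow_add, ← pow_add]
        ring
      rw [key2]
      ring
    rw [hd.deriv]
    rw [Finset.prod_range_succ, show n+1+(m+1) = n+1+m+1 by omega]
    push_cast
    ring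

theorem inner_product_of_higher_order_poles
    (z w : ℂ) (hz : 0 < z.re) (hw : 0 < w.re)
    (d k : ℕ) (hd : 1 ≤ d) (hk : 1 ≤ k) :
    (1 / (2 * (Real.pi : ℂ))) *
        ∫ ω : ℝ, ((Complex.I * ω - z) ^ d)⁻¹ * star (((Complex.I * ω - w) ^ k)⁻¹) =
      ((-1) ^ (k - 1) / (Nat.factorial (d - 1) : ℂ)) *
        iteratedDeriv (d - 1) (fun s : ℂ => ((s + star w) ^ k)⁻¹) z := by
  obtain ⟨m, rfl⟩ : ∃ m, d = m + 1 := ⟨d - 1, by omega⟩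
  obtain ⟨n, rfl⟩ : ∃ n, k = n + 1 := ⟨k - 1, by omega⟩
  set b : ℂ := (starRingEnd ℂ) w with hbdef
  have hb : 0 < b.re := by simpa [hbdef] using hw
  have hstar : (star w : ℂ) = b := rfl
  have hint : (fun ω : ℝ => ((Complex.I * ω - z) ^ (m+1))⁻¹ * star (((Complex.I * ω - w) ^ (n+1))⁻¹))
      = fun ω : ℝ => ((Complex.I * ω - z)^(m+1))⁻¹ * ((-(Complex.I * ω) - b)^(n+1))⁻¹ := by
    funext ω
    congr 1
    rw [show (star (((Complex.I * ω - w) ^ (n+1))⁻¹) : ℂ)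
        = (starRingEnd ℂ) (((Complex.I * ω - w) ^ (n+1))⁻¹) from rfl]
    rw [map_inv₀, map_pow, map_sub, map_mul]
    simp only [Complex.conj_I, Complex.conj_ofReal]
    congr 2
    rw [hbdef]
    ring
  rw [hint, lemA m n b hb z hz]
  have hzb : z + b ≠ 0 := sum_ne z b hz hb
  rw [show m+1-1 = m from rfl, show n+1-1 = n from rfl, hstar, iterB n b m z hzb]
  have hπ : (Real.pi : ℂ) ≠ 0 := Complex.ofReal_ne_zero.mpr Real.pi_ne_zero
  have hfne : ((m.factorial : ℂ)) ≠ 0 := Nat.cast_ne_zero.mpr (Nat.factorial_ne_zero m)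
  rw [show m+n+1 = n+1+m by omega]
  field_simp
  ring
end

section
/- Let z_1, ..., z_n be positive real numbers and L(s) = ∏_{i=1}^n (z_i - s)/(z_i + s). Then (1 - L(s))/s extends to a function holomorphic on the open right half-plane, square-integrable on the imaginary axis, and (1/(2π)) ∫_{-∞}^{∞} |(1 - L(iω))/(iω)|² dω = 2 Σ_{i=1}^n 1/z_i. -/
open Complex MeasureTheory Polynomial Filter

noncomputable def Qb {n : ℕ} (z : Fin n → ℝ) : Polynomial ℂ := ∏ i, (X + C (z i : ℂ))
noncomputable def Rb {n : ℕ} (z : Fin n → ℝ) : Polynomial ℂ :=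
  (Qb z - ∏ i, (C (z i : ℂ) - X)).divX
noncomputable def Gb {n : ℕ} (z : Fin n → ℝ) (s : ℂ) : ℂ := (Rb z).eval s / (Qb z).eval s

lemma Qb_eval {n : ℕ} (z : Fin n → ℝ) (s : ℂ) : (Qb z).eval s = ∏ i, (s + (z i : ℂ)) := by
  simp [Qb, eval_prod]

lemma Rb_eval {n : ℕ} (z : Fin n → ℝ) (s : ℂ) :
    s * (Rb z).eval s = ∏ i, (s + (z i : ℂ)) - ∏ i, ((z i : ℂ) - s) := by
  have hc : (Qb z - ∏ i, (C (z i : ℂ) - X)).coeff 0 = 0 := by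
    rw [coeff_zero_eq_eval_zero]
    simp [Qb, eval_prod]
  have h := X_mul_divX_add (Qb z - ∏ i, (C (z i : ℂ) - X))
  rw [hc, map_zero, add_zero] at h
  have h2 := congrArg (eval s) h
  simp only [eval_mul, eval_X, eval_sub, eval_prod, eval_add, eval_C] at h2
  rw [Rb]
  simpa [Qb, eval_prod] using h2

lemma Qb_ne {n : ℕ} {z : Fin n → ℝ} (hz : ∀ i, 0 < z i) {s : ℂ} (hs : 0 ≤ s.re) :
    (Qb z).eval s ≠ 0 := by
  rw [Qb_eval]
  refine Finset.prod_ne_zero_iff.2 fun i _ => ?_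
  intro h
  have : (s + (z i : ℂ)).re = 0 := by rw [h]; simp
  simp only [Complex.add_re, Complex.ofReal_re] at this
  linarith [hz i]

lemma Gb_eq {n : ℕ} {z : Fin n → ℝ} (hz : ∀ i, 0 < z i) {s : ℂ} (hs : 0 ≤ s.re)
    (hs0 : s ≠ 0) :
    Gb z s = (1 - ∏ i, (((z i : ℂ) - s) / ((z i : ℂ) + s))) / s := by
  have hQ : (∏ i, (s + (z i : ℂ))) ≠ 0 := by rw [← Qb_eval]; exact Qb_ne hz hs
  have hprod : ∏ i, (((z i : ℂ) - s) / ((z i : ℂ) + s))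
      = (∏ i, ((z i : ℂ) - s)) / ∏ i, (s + (z i : ℂ)) := by
    rw [Finset.prod_div_distrib]
    congr 1
    exact Finset.prod_congr rfl fun i _ => by ring
  rw [Gb, hprod, Qb_eval, eq_div_iff hs0, div_mul_eq_mul_div, div_eq_iff hQ,
    mul_comm _ s, Rb_eval]
  field_simp

lemma norm_factor_le {z : ℝ} (hz : 0 < z) {s : ℂ} (hs : 0 ≤ s.re) :
    ‖((z : ℂ) - s) / ((z : ℂ) + s)‖ ≤ 1 := by
  rw [norm_div]
  have h : normSq ((z : ℂ) - s) ≤ normSq ((z : ℂ) + s) := by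
    simp only [Complex.normSq_apply, Complex.sub_re, Complex.sub_im, Complex.add_re,
      Complex.add_im, Complex.ofReal_re, Complex.ofReal_im]
    nlinarith
  have h2 : ‖(z : ℂ) - s‖ ≤ ‖(z : ℂ) + s‖ := by
    rw [Complex.norm_def, Complex.norm_def]
    exact Real.sqrt_le_sqrt h
  rcases eq_or_ne ((z : ℂ) + s) 0 with h0 | h0
  · exfalso
    have : ((z : ℂ) + s).re = 0 := by rw [h0]; simp
    simp only [Complex.add_re, Complex.ofReal_re] at this
    linarith
  · rw [div_le_one (norm_pos_iff.2 h0)]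
    exact h2

lemma norm_prod_le_one {n : ℕ} {z : Fin n → ℝ} (hz : ∀ i, 0 < z i) {s : ℂ} (hs : 0 ≤ s.re) :
    ‖∏ i, (((z i : ℂ) - s) / ((z i : ℂ) + s))‖ ≤ 1 := by
  rw [norm_prod]
  exact Finset.prod_le_one (fun i _ => norm_nonneg _) (fun i _ => norm_factor_le (hz i) hs)

lemma Gb_bound {n : ℕ} {z : Fin n → ℝ} (hz : ∀ i, 0 < z i) {s : ℂ} (hs : 0 ≤ s.re)
    (hs0 : s ≠ 0) : ‖Gb z s‖ ≤ 2 / ‖s‖ := by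
  rw [Gb_eq hz hs hs0, norm_div]
  have h1 : ‖1 - ∏ i, (((z i : ℂ) - s) / ((z i : ℂ) + s))‖ ≤ 2 := by
    calc ‖1 - ∏ i, (((z i : ℂ) - s) / ((z i : ℂ) + s))‖
        ≤ ‖(1 : ℂ)‖ + ‖∏ i, (((z i : ℂ) - s) / ((z i : ℂ) + s))‖ := norm_sub_le _ _
      _ ≤ 1 + 1 := by simpa using norm_prod_le_one hz hs
      _ = 2 := by norm_num
  exact (div_le_div_iff_of_pos_right (norm_pos_iff.2 hs0)).2 h1

lemma norm_I_mul (ω : ℝ) : ‖Complex.I * (ω : ℂ)‖ = |ω| := by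
  rw [norm_mul, Complex.norm_I, one_mul, Complex.norm_real, Real.norm_eq_abs]

lemma I_mul_ne {ω : ℝ} (hω : ω ≠ 0) : Complex.I * (ω : ℂ) ≠ 0 :=
  mul_ne_zero Complex.I_ne_zero (Complex.ofReal_ne_zero.2 hω)

lemma integrable_of_two_bounds {E : Type*} [NormedAddCommGroup E] {c : ℝ → E}
    (hm : AEStronglyMeasurable c volume) {a b : ℝ}
    (h1 : ∀ ω, ‖c ω‖ ≤ a) (h2 : ∀ ω : ℝ, ω ≠ 0 → ‖c ω‖ ≤ b / ω ^ 2) :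
    Integrable c volume := by
  have ha : 0 ≤ a := le_trans (norm_nonneg _) (h1 0)
  have hb : 0 ≤ b := by
    have := le_trans (norm_nonneg (c 1)) (h2 1 one_ne_zero)
    simpa using this
  refine (integrable_inv_one_add_sq.const_mul (a + b)).mono hm (ae_of_all _ fun ω => ?_)
  have hpos : (0:ℝ) < 1 + ω ^ 2 := by positivity
  have key : ‖c ω‖ * (1 + ω ^ 2) ≤ a + b := by
    rcases eq_or_ne ω 0 with rfl | hω
    · have := h1 0; simp only [ne_eq, zero_pow, mul_one] at *
      nlinarith [h1 (0:ℝ)]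
    · have hA := h1 ω
      have hω2 : (0:ℝ) < ω ^ 2 := by positivity
      have hB : ‖c ω‖ * ω ^ 2 ≤ b := by
        have := h2 ω hω
        calc ‖c ω‖ * ω ^ 2 ≤ b / ω ^ 2 * ω ^ 2 := by nlinarith
          _ = b := by field_simp
      nlinarith
  have hnorm : ‖(a + b) * (1 + ω ^ 2)⁻¹‖ = (a + b) * (1 + ω ^ 2)⁻¹ := by
    rw [Real.norm_eq_abs, _root_.abs_of_nonneg (by positivity)]
  rw [hnorm, ← div_eq_mul_inv, le_div_iff₀ hpos]
  linarith

lemma contour_zero (f : ℂ → ℂ) (hd : ∀ s : ℂ, 0 ≤ s.re → DifferentiableAt ℂ f s)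
    {C : ℝ} (hC : 0 ≤ C) (hb : ∀ s : ℂ, 0 ≤ s.re → 1 ≤ ‖s‖ → ‖f s‖ ≤ C / ‖s‖ ^ 2)
    (hi : Integrable (fun ω : ℝ => f (Complex.I * ω)) volume) :
    ∫ ω : ℝ, f (Complex.I * ω) = 0 := by
  have key : ∀ R : ℝ, 1 ≤ R → ‖∫ ω in (-R)..R, f (Complex.I * ω)‖ ≤ 4 * C / R := by
    intro R hR
    have hR0 : (0:ℝ) < R := lt_of_lt_of_le one_pos hR
    have hdiff : DifferentiableOn ℂ f
        (Set.uIcc (⟨0, -R⟩ : ℂ).re (⟨R, R⟩ : ℂ).re ×ℂ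
          Set.uIcc (⟨0, -R⟩ : ℂ).im (⟨R, R⟩ : ℂ).im) := by
      intro s hs
      refine (hd s ?_).differentiableWithinAt
      have := hs.1
      simp only [Complex.mem_reProdIm] at hs
      have h1 := hs.1
      rw [Set.uIcc_of_le (by linarith : (0:ℝ) ≤ R)] at h1
      exact h1.1
    have hrect := Complex.integral_boundary_rect_eq_zero_of_differentiableOn f
      (⟨0, -R⟩ : ℂ) (⟨R, R⟩ : ℂ) hdiff
    simp only at hrect
    -- name the four integrals
    have hleft : (∫ y in (-R)..R, f ((0:ℝ) + (y:ℂ) * Complex.I))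
        = ∫ ω in (-R)..R, f (Complex.I * ω) := by
      refine intervalIntegral.integral_congr fun y _ => ?_
      norm_num [mul_comm]
    -- bounds on the three other sides
    have hbound : ∀ s : ℂ, 0 ≤ s.re → R ≤ ‖s‖ → ‖f s‖ ≤ C / R ^ 2 := by
      intro s hsre hsn
      refine le_trans (hb s hsre (le_trans hR hsn)) ?_
      apply div_le_div_of_nonneg_left hC (by positivity)
      exact pow_le_pow_left₀ hR0.le hsn 2
    have hbot : ‖∫ x in (0:ℝ)..R, f ((x:ℂ) + ((-R:ℝ):ℂ) * Complex.I)‖ ≤ C / R ^ 2 * |R - 0| := by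
      refine intervalIntegral.norm_integral_le_of_norm_le_const fun x hx => ?_
      rw [Set.uIoc_of_le hR0.le] at hx
      refine hbound _ (by simp [hx.1.le]) ?_
      have him : ((x:ℂ) + ((-R:ℝ):ℂ) * Complex.I).im = -R := by simp
      calc R = |(((x:ℂ) + ((-R:ℝ):ℂ) * Complex.I).im)| := by rw [him]; rw [abs_neg, abs_of_pos hR0]
        _ ≤ ‖(x:ℂ) + ((-R:ℝ):ℂ) * Complex.I‖ := Complex.abs_im_le_norm _
    have htop : ‖∫ x in (0:ℝ)..R, f ((x:ℂ) + ((R:ℝ):ℂ) * Complex.I)‖ ≤ C / R ^ 2 * |R - 0| := by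
      refine intervalIntegral.norm_integral_le_of_norm_le_const fun x hx => ?_
      rw [Set.uIoc_of_le hR0.le] at hx
      refine hbound _ (by simp [hx.1.le]) ?_
      have him : ((x:ℂ) + ((R:ℝ):ℂ) * Complex.I).im = R := by simp
      calc R = |(((x:ℂ) + ((R:ℝ):ℂ) * Complex.I).im)| := by rw [him, abs_of_pos hR0]
        _ ≤ ‖(x:ℂ) + ((R:ℝ):ℂ) * Complex.I‖ := Complex.abs_im_le_norm _
    have hright : ‖∫ y in (-R)..R, f (((R:ℝ):ℂ) + (y:ℂ) * Complex.I)‖ ≤ C / R ^ 2 * |R - (-R)| := by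
      refine intervalIntegral.norm_integral_le_of_norm_le_const fun y hy => ?_
      refine hbound _ (by simp [hR0.le]) ?_
      have hre : ((((R:ℝ)):ℂ) + (y:ℂ) * Complex.I).re = R := by simp
      calc R = |((((R:ℝ):ℂ) + (y:ℂ) * Complex.I).re)| := by rw [hre, abs_of_pos hR0]
        _ ≤ ‖((R:ℝ):ℂ) + (y:ℂ) * Complex.I‖ := Complex.abs_re_le_norm _
    have hRne : R ≠ 0 := hR0.ne'
    have habs0 : |R - 0| = R := by rw [sub_zero, _root_.abs_of_pos hR0]
    have habs2 : |R - -R| = 2 * R := by rw [sub_neg_eq_add, _root_.abs_of_pos (by linarith)]; ring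
    simp only [smul_eq_mul] at hrect
    have heqI : Complex.I * (∫ ω in (-R)..R, f (Complex.I * ω))
        = (∫ x in (0:ℝ)..R, f ((x:ℂ) + ((-R:ℝ):ℂ) * Complex.I))
          - (∫ x in (0:ℝ)..R, f ((x:ℂ) + ((R:ℝ):ℂ) * Complex.I))
          + Complex.I * (∫ y in (-R)..R, f (((R:ℝ):ℂ) + (y:ℂ) * Complex.I)) := by
      rw [← hleft]
      linear_combination (-1 : ℂ) * hrect
    have hnorm : ‖∫ ω in (-R)..R, f (Complex.I * ω)‖
        = ‖Complex.I * (∫ ω in (-R)..R, f (Complex.I * ω))‖ := by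
      rw [norm_mul, Complex.norm_I, one_mul]
    rw [hnorm, heqI]
    have h1 := norm_add_le ((∫ x in (0:ℝ)..R, f ((x:ℂ) + ((-R:ℝ):ℂ) * Complex.I))
        - (∫ x in (0:ℝ)..R, f ((x:ℂ) + ((R:ℝ):ℂ) * Complex.I)))
        (Complex.I * (∫ y in (-R)..R, f (((R:ℝ):ℂ) + (y:ℂ) * Complex.I)))
    have h2 := norm_sub_le (∫ x in (0:ℝ)..R, f ((x:ℂ) + ((-R:ℝ):ℂ) * Complex.I))
        (∫ x in (0:ℝ)..R, f ((x:ℂ) + ((R:ℝ):ℂ) * Complex.I))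
    have h3 : ‖Complex.I * (∫ y in (-R)..R, f (((R:ℝ):ℂ) + (y:ℂ) * Complex.I))‖
        = ‖∫ y in (-R)..R, f (((R:ℝ):ℂ) + (y:ℂ) * Complex.I)‖ := by
      rw [norm_mul, Complex.norm_I, one_mul]
    rw [habs0] at hbot htop
    rw [habs2] at hright
    rw [h3] at h1
    have : C / R ^ 2 * R + C / R ^ 2 * R + C / R ^ 2 * (2 * R) = 4 * C / R := by
      field_simp; ring
    linarith
  have T1 : Filter.Tendsto (fun R : ℝ => ∫ ω in (-R)..R, f (Complex.I * ω)) atTop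
      (nhds (∫ ω : ℝ, f (Complex.I * ω))) :=
    intervalIntegral_tendsto_integral hi tendsto_neg_atTop_atBot tendsto_id
  have T2 : Filter.Tendsto (fun R : ℝ => ∫ ω in (-R)..R, f (Complex.I * ω)) atTop (nhds 0) := by
    refine squeeze_zero_norm' ((eventually_ge_atTop 1).mono fun R hR => key R hR) ?_
    simpa using (tendsto_const_nhds (x := 4 * C)).div_atTop tendsto_id
  exact tendsto_nhds_unique T1 T2

lemma Gb_diff {n : ℕ} {z : Fin n → ℝ} (hz : ∀ i, 0 < z i) {s : ℂ} (hs : 0 ≤ s.re) :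
    DifferentiableAt ℂ (Gb z) s := by
  exact DifferentiableAt.div (Polynomial.differentiableAt _)
    (Polynomial.differentiableAt _) (Qb_ne hz hs)

lemma phi_cont {n : ℕ} (z : Fin n → ℝ) (hz : ∀ i, 0 < z i) :
    Continuous (fun ω : ℝ => Gb z (Complex.I * ω)) := by
  have h : Continuous (fun ω : ℝ => (Complex.I * (ω:ℂ))) := by continuity
  refine Continuous.div (((Rb z).continuous).comp h) (((Qb z).continuous).comp h) ?_
  intro ω
  exact Qb_ne hz (by simp)

lemma phi_bound {n : ℕ} (z : Fin n → ℝ) (hz : ∀ i, 0 < z i) :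
    ∃ M : ℝ, 0 ≤ M ∧ (∀ ω : ℝ, ‖Gb z (Complex.I * ω)‖ ≤ M) := by
  obtain ⟨M₀, hM₀⟩ := (isCompact_Icc : IsCompact (Set.Icc (-1:ℝ) 1)).exists_bound_of_continuousOn
    ((phi_cont z hz).continuousOn)
  refine ⟨max M₀ 2, le_trans (by norm_num) (le_max_right _ _), fun ω => ?_⟩
  rcases le_or_gt |ω| 1 with h | h
  · exact le_trans (hM₀ ω (abs_le.1 h)) (le_max_left _ _)
  · have hω : ω ≠ 0 := by
      intro h0; rw [h0] at h; simp at h; linarith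
    have hG := Gb_bound hz (s := Complex.I * ω) (by simp) (I_mul_ne hω)
    rw [norm_I_mul] at hG
    refine le_trans hG (le_trans ?_ (le_max_right _ _))
    rw [div_le_iff₀ (by linarith : (0:ℝ) < |ω|)]
    nlinarith

lemma phi_bound_div {n : ℕ} (z : Fin n → ℝ) (hz : ∀ i, 0 < z i) (ω : ℝ) (hω : ω ≠ 0) :
    ‖Gb z (Complex.I * ω)‖ ≤ 2 / |ω| := by
  have hG := Gb_bound hz (s := Complex.I * ω) (by simp) (I_mul_ne hω)
  rwa [norm_I_mul] at hG

lemma bfun_norm (z0 : ℝ) (hz0 : 0 < z0) (ω : ℝ) :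
    ‖(2:ℂ) / ((z0:ℂ) + Complex.I * ω)‖ ^ 2 = 4 / (z0 ^ 2 + ω ^ 2) := by
  rw [norm_div, div_pow, Complex.sq_norm,
    Complex.sq_norm]
  have h1 : Complex.normSq 2 = 4 := by
    simp [Complex.normSq_apply]; norm_num
  have h2 : Complex.normSq ((z0:ℂ) + Complex.I * ω) = z0 ^ 2 + ω ^ 2 := by
    simp [Complex.normSq_apply]; ring
  rw [h1, h2]

lemma bfun_norm_le (z0 : ℝ) (hz0 : 0 < z0) (ω : ℝ) :
    ‖(2:ℂ) / ((z0:ℂ) + Complex.I * ω)‖ ≤ 2 / z0 ∧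
    (ω ≠ 0 → ‖(2:ℂ) / ((z0:ℂ) + Complex.I * ω)‖ ≤ 2 / |ω|) := by
  have hsq := bfun_norm z0 hz0 ω
  have hnn : (0:ℝ) ≤ ‖(2:ℂ) / ((z0:ℂ) + Complex.I * ω)‖ := norm_nonneg _
  constructor
  · rw [← Real.sqrt_sq hnn, ← Real.sqrt_sq (by positivity : (0:ℝ) ≤ 2 / z0)]
    apply Real.sqrt_le_sqrt
    rw [hsq, div_pow]
    rw [div_le_div_iff₀ (by positivity) (by positivity)]
    nlinarith
  · intro hω
    rw [← Real.sqrt_sq hnn, ← Real.sqrt_sq (by positivity : (0:ℝ) ≤ 2 / |ω|)]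
    apply Real.sqrt_le_sqrt
    rw [hsq, div_pow]
    rw [div_le_div_iff₀ (by positivity) (by positivity)]
    nlinarith [sq_nonneg z0, sq_nonneg ω, _root_.sq_abs ω]

lemma base_integral_s12 (z0 : ℝ) (hz0 : 0 < z0) :
    ∫ ω : ℝ, ‖(2:ℂ) / ((z0:ℂ) + Complex.I * ω)‖ ^ 2 = 4 * Real.pi / z0 := by
  have h : (fun ω : ℝ => ‖(2:ℂ) / ((z0:ℂ) + Complex.I * ω)‖ ^ 2)
      = fun ω : ℝ => (4 / z0 ^ 2) * (1 + (ω * z0⁻¹) ^ 2)⁻¹ := by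
    funext ω
    rw [bfun_norm z0 hz0 ω]
    field_simp
  rw [h, MeasureTheory.integral_const_mul (4 / z0 ^ 2) _]
  have := MeasureTheory.Measure.integral_comp_inv_mul_right (fun t : ℝ => (1 + t ^ 2)⁻¹) z0
  rw [this, integral_univ_inv_one_add_sq, smul_eq_mul, _root_.abs_of_pos hz0]
  field_simp

lemma reAdd_ne_zero (z0 : ℝ) (hz0 : 0 < z0) {s : ℂ} (hs : 0 ≤ s.re) : (z0:ℂ) + s ≠ 0 := by
  intro h
  have : ((z0:ℂ) + s).re = 0 := by rw [h]; simp
  simp only [Complex.add_re, Complex.ofReal_re] at this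
  linarith

lemma norm_le_norm_add (z0 : ℝ) (hz0 : 0 < z0) {s : ℂ} (hs : 0 ≤ s.re) :
    ‖s‖ ≤ ‖(z0:ℂ) + s‖ := by
  rw [Complex.norm_def, Complex.norm_def]
  apply Real.sqrt_le_sqrt
  simp only [Complex.normSq_apply, Complex.add_re, Complex.add_im, Complex.ofReal_re,
    Complex.ofReal_im]
  nlinarith

lemma cross_zero {n : ℕ} (A : Fin n → ℝ) (hA : ∀ i, 0 < A i) (z0 : ℝ) (hz0 : 0 < z0) :
    ∫ ω : ℝ, Gb A (Complex.I * ω) * ((2:ℂ) / ((z0:ℂ) + Complex.I * ω)) = 0 := by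
  obtain ⟨M, hM0, hM⟩ := phi_bound A hA
  have contb : Continuous (fun ω : ℝ => (2:ℂ) / ((z0:ℂ) + Complex.I * ω)) := by
    refine continuous_const.div (by continuity) fun ω => reAdd_ne_zero z0 hz0 (by simp)
  have hbnorm : ∀ ω : ℝ, ‖(2:ℂ) / ((z0:ℂ) + Complex.I * ω)‖ ≤ 2 / z0 :=
    fun ω => (bfun_norm_le z0 hz0 ω).1
  have key := contour_zero (fun s => Gb A s * ((2:ℂ) / ((z0:ℂ) + s))) ?_ (C := 4)
    (by norm_num) ?_ ?_
  · exact key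
  · intro s hs
    exact (Gb_diff hA hs).mul (DifferentiableAt.div (differentiableAt_const _)
      (differentiableAt_const _ |>.add differentiableAt_id) (reAdd_ne_zero z0 hz0 hs))
  · intro s hs hs1
    have hsne : s ≠ 0 := by
      intro h; rw [h] at hs1; simp at hs1; linarith
    have hG := Gb_bound hA hs hsne
    have hs0 : (0:ℝ) < ‖s‖ := norm_pos_iff.2 hsne
    have hb2 : ‖(2:ℂ) / ((z0:ℂ) + s)‖ ≤ 2 / ‖s‖ := by
      rw [norm_div]
      have h1 := norm_le_norm_add z0 hz0 hs
      have h2 : (0:ℝ) < ‖(z0:ℂ) + s‖ := lt_of_lt_of_le hs0 h1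
      rw [div_le_div_iff₀ h2 hs0]
      have : ‖(2:ℂ)‖ = 2 := by norm_num
      nlinarith [norm_nonneg ((2:ℂ))]
    rw [norm_mul]
    calc ‖Gb A s‖ * ‖(2:ℂ) / ((z0:ℂ) + s)‖ ≤ (2 / ‖s‖) * (2 / ‖s‖) := by
          apply mul_le_mul hG hb2 (norm_nonneg _) (by positivity)
      _ = 4 / ‖s‖ ^ 2 := by field_simp; ring
  · refine integrable_of_two_bounds (((phi_cont A hA).mul contb).aestronglyMeasurable)
      (a := M * (2 / z0)) (b := 4) (fun ω => ?_) (fun ω hω => ?_)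
    · rw [norm_mul]
      exact mul_le_mul (hM ω) (hbnorm ω) (norm_nonneg _) hM0
    · rw [norm_mul]
      have h1 := phi_bound_div A hA ω hω
      have h2 := (bfun_norm_le z0 hz0 ω).2 hω
      have habs : (0:ℝ) < |ω| := abs_pos.2 hω
      calc ‖Gb A (Complex.I * ω)‖ * ‖(2:ℂ) / ((z0:ℂ) + Complex.I * ω)‖
          ≤ (2 / |ω|) * (2 / |ω|) := mul_le_mul h1 h2 (norm_nonneg _) (by positivity)
        _ = 4 / ω ^ 2 := by
            rw [div_mul_div_comm, show |ω| * |ω| = ω ^ 2 by rw [← _root_.sq_abs ω]; ring]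
            norm_num

lemma ptwise {n : ℕ} (z : Fin (n+1) → ℝ) (hz : ∀ i, 0 < z i) (ω : ℝ) (hω : ω ≠ 0) :
    ‖Gb z (Complex.I * ω)‖ ^ 2
      = ‖Gb (fun i => z i.succ) (Complex.I * ω)‖ ^ 2
        + ‖(2:ℂ) / ((z 0 : ℂ) + Complex.I * ω)‖ ^ 2
        + 2 * (Gb (fun i => z i.succ) (Complex.I * ω)
            * ((2:ℂ) / ((z 0 : ℂ) + Complex.I * ω))).re := by
  have hA : ∀ i : Fin n, 0 < z i.succ := fun i => hz _
  set u : ℂ := Complex.I * ω with hu_def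
  have hu : u ≠ 0 := I_mul_ne hω
  have hure : (0:ℝ) ≤ u.re := by simp [hu_def]
  have huim : u.re = 0 := by simp [hu_def]
  have hz0u : (z 0 : ℂ) + u ≠ 0 := reAdd_ne_zero (z 0) (hz 0) hure
  have hz0mu : (z 0 : ℂ) - u ≠ 0 := by
    intro h
    have : ((z 0 : ℂ) - u).re = 0 := by rw [h]; simp
    simp only [Complex.sub_re, Complex.ofReal_re, huim] at this
    linarith [hz 0]
  have hGz := Gb_eq hz hure hu
  have hGA := Gb_eq hA hure hu
  set B : ℂ := ((z 0 : ℂ) - u) / ((z 0 : ℂ) + u) with hB_def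
  set PA : ℂ := ∏ i : Fin n, (((z i.succ : ℝ) : ℂ) - u) / (((z i.succ : ℝ) : ℂ) + u)
    with hPA_def
  have hsplit : (∏ i : Fin (n+1), (((z i : ℝ):ℂ) - u) / (((z i : ℝ):ℂ) + u)) = B * PA :=
    Fin.prod_univ_succ _
  have hkey : Gb z u = Gb (fun i => z i.succ) u * B + 2 / ((z 0 : ℂ) + u) := by
    rw [hGz, hGA, hsplit, hB_def]
    field_simp
    ring
  have hB1 : Complex.normSq B = 1 := by
    rw [hB_def, map_div₀]
    have h1 : Complex.normSq ((z 0:ℂ) - u) = (z 0) ^ 2 + ω ^ 2 := by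
      simp [hu_def, Complex.normSq_apply]; ring
    have h2 : Complex.normSq ((z 0:ℂ) + u) = (z 0) ^ 2 + ω ^ 2 := by
      simp [hu_def, Complex.normSq_apply]; ring
    rw [h1, h2]
    have : (z 0 : ℝ) ^ 2 + ω ^ 2 ≠ 0 := by positivity
    field_simp
  have hconjb : (starRingEnd ℂ) ((2:ℂ) / ((z 0:ℂ) + u)) = (2:ℂ) / ((z 0:ℂ) - u) := by
    rw [hu_def, map_div₀]
    have hc : (starRingEnd ℂ) ((z 0:ℂ) + Complex.I * ω) = (z 0:ℂ) - Complex.I * ω := by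
      simp [map_add, map_mul, Complex.conj_ofReal, Complex.conj_I]
      ring
    rw [hc, Complex.conj_ofNat]
  have hBb : B * (starRingEnd ℂ) ((2:ℂ) / ((z 0:ℂ) + u)) = (2:ℂ) / ((z 0:ℂ) + u) := by
    rw [hconjb, hB_def]
    field_simp
  have hn : ∀ w : ℂ, ‖w‖ ^ 2 = Complex.normSq w := fun w => by
    rw [Complex.sq_norm]
  rw [hn, hn, hn, hkey, Complex.normSq_add, map_mul, hB1, mul_one, mul_assoc, hBb]

lemma main_ind : ∀ (n : ℕ) (z : Fin n → ℝ), (∀ i, 0 < z i) →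
    Integrable (fun ω : ℝ => ‖Gb z (Complex.I * ω)‖ ^ 2) volume ∧
    ∫ ω : ℝ, ‖Gb z (Complex.I * ω)‖ ^ 2 = 4 * Real.pi * ∑ i, 1 / z i := by
  intro n
  induction n with
  | zero =>
    intro z hz
    have h0 : ∀ s : ℂ, Gb z s = 0 := by
      intro s
      simp [Gb, Rb, Qb]
    simp only [h0, norm_zero]
    constructor
    · simpa using integrable_zero ℝ ℝ (volume : Measure ℝ)
    · simp
  | succ n ih =>
    intro z hz
    have hA : ∀ i : Fin n, 0 < z i.succ := fun i => hz _
    obtain ⟨IntA, ValA⟩ := ih (fun i => z i.succ) hA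
    obtain ⟨M, hM0, hM⟩ := phi_bound (fun i => z i.succ) hA
    have hz0 : 0 < z 0 := hz 0
    have contb : Continuous (fun ω : ℝ => (2:ℂ) / ((z 0:ℂ) + Complex.I * ω)) := by
      refine continuous_const.div (by continuity) fun ω => reAdd_ne_zero (z 0) hz0 (by simp)
    -- integrability of ‖b‖²
    have IntB : Integrable (fun ω : ℝ => ‖(2:ℂ) / ((z 0:ℂ) + Complex.I * ω)‖ ^ 2) volume := by
      refine integrable_of_two_bounds ((contb.norm.pow 2).aestronglyMeasurable)
        (a := (2 / z 0) ^ 2) (b := 4) (fun ω => ?_) (fun ω hω => ?_)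
      · rw [Real.norm_eq_abs, _root_.abs_of_nonneg (by positivity)]
        have := (bfun_norm_le (z 0) hz0 ω).1
        have hnn := norm_nonneg ((2:ℂ) / ((z 0:ℂ) + Complex.I * ω))
        nlinarith
      · rw [Real.norm_eq_abs, _root_.abs_of_nonneg (by positivity)]
        have := (bfun_norm_le (z 0) hz0 ω).2 hω
        have hnn := norm_nonneg ((2:ℂ) / ((z 0:ℂ) + Complex.I * ω))
        have habs : (0:ℝ) < |ω| := abs_pos.2 hω
        have h2 : ‖(2:ℂ) / ((z 0:ℂ) + Complex.I * ω)‖ ^ 2 ≤ (2 / |ω|) ^ 2 := by nlinarith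
        calc ‖(2:ℂ) / ((z 0:ℂ) + Complex.I * ω)‖ ^ 2 ≤ (2 / |ω|) ^ 2 := h2
          _ = 4 / ω ^ 2 := by rw [div_pow, _root_.sq_abs]; norm_num
    -- integrability of the cross term
    have Intcross0 : Integrable
        (fun ω : ℝ => Gb (fun i => z i.succ) (Complex.I * ω)
          * ((2:ℂ) / ((z 0:ℂ) + Complex.I * ω))) volume := by
      refine integrable_of_two_bounds
        (((phi_cont (fun i => z i.succ) hA).mul contb).aestronglyMeasurable)
        (a := M * (2 / z 0)) (b := 4) (fun ω => ?_) (fun ω hω => ?_)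
      · rw [norm_mul]
        exact mul_le_mul (hM ω) ((bfun_norm_le (z 0) hz0 ω).1) (norm_nonneg _) hM0
      · rw [norm_mul]
        have h1 := phi_bound_div (fun i => z i.succ) hA ω hω
        have h2 := (bfun_norm_le (z 0) hz0 ω).2 hω
        have habs : (0:ℝ) < |ω| := abs_pos.2 hω
        calc ‖Gb (fun i => z i.succ) (Complex.I * ω)‖ * ‖(2:ℂ) / ((z 0:ℂ) + Complex.I * ω)‖
            ≤ (2 / |ω|) * (2 / |ω|) := mul_le_mul h1 h2 (norm_nonneg _) (by positivity)
          _ = 4 / ω ^ 2 := by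
              rw [div_mul_div_comm, show |ω| * |ω| = ω ^ 2 by rw [← _root_.sq_abs ω]; ring]
              norm_num
    have Intcross : Integrable (fun ω : ℝ => 2 * (Gb (fun i => z i.succ) (Complex.I * ω)
        * ((2:ℂ) / ((z 0:ℂ) + Complex.I * ω))).re) volume := by
      have := Intcross0.re
      simpa using this.const_mul 2
    have hcross0 := cross_zero (fun i => z i.succ) hA (z 0) hz0
    have hcrossval : ∫ ω : ℝ, 2 * (Gb (fun i => z i.succ) (Complex.I * ω)
        * ((2:ℂ) / ((z 0:ℂ) + Complex.I * ω))).re = 0 := by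
      rw [MeasureTheory.integral_const_mul]
      have hre := ContinuousLinearMap.integral_comp_comm Complex.reCLM Intcross0
      simp only [Complex.reCLM_apply] at hre
      rw [hre, hcross0]
      simp
    have hae0 : ∀ᵐ ω : ℝ ∂volume, ω ≠ 0 := by
      have : (volume : Measure ℝ) {0} = 0 := Real.volume_singleton
      exact compl_mem_ae_iff.2 this
    have hae : (fun ω : ℝ => ‖Gb z (Complex.I * ω)‖ ^ 2)
        =ᵐ[volume] (fun ω : ℝ => ‖Gb (fun i => z i.succ) (Complex.I * ω)‖ ^ 2
          + ‖(2:ℂ) / ((z 0:ℂ) + Complex.I * ω)‖ ^ 2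
          + 2 * (Gb (fun i => z i.succ) (Complex.I * ω)
            * ((2:ℂ) / ((z 0:ℂ) + Complex.I * ω))).re) := by
      filter_upwards [hae0] with ω hω
      exact ptwise z hz ω hω
    have IntAB : Integrable (fun ω : ℝ => ‖Gb (fun i => z i.succ) (Complex.I * ω)‖ ^ 2
        + ‖(2:ℂ) / ((z 0:ℂ) + Complex.I * ω)‖ ^ 2) volume := IntA.add IntB
    have IntS : Integrable (fun ω : ℝ => ‖Gb (fun i => z i.succ) (Complex.I * ω)‖ ^ 2
        + ‖(2:ℂ) / ((z 0:ℂ) + Complex.I * ω)‖ ^ 2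
        + 2 * (Gb (fun i => z i.succ) (Complex.I * ω)
            * ((2:ℂ) / ((z 0:ℂ) + Complex.I * ω))).re) volume := IntAB.add Intcross
    refine ⟨IntS.congr hae.symm, ?_⟩
    rw [MeasureTheory.integral_congr_ae hae, MeasureTheory.integral_add IntAB Intcross,
      MeasureTheory.integral_add IntA IntB, ValA, base_integral_s12 (z 0) hz0, hcrossval,
      Fin.sum_univ_succ]
    field_simp
    ring

lemma ae_ne_zero : ∀ᵐ ω : ℝ ∂(volume : Measure ℝ), ω ≠ 0 :=
  compl_mem_ae_iff.2 Real.volume_singleton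

theorem step_tracking_error_blaschke_product
    (n : ℕ) (z : Fin n → ℝ) (hz : ∀ i, 0 < z i) :
    ∃ g : ℂ → ℂ,
      (∀ s : ℂ, s ≠ 0 →
        g s = (1 - ∏ i, (((z i : ℂ) - s) / ((z i : ℂ) + s))) / s) ∧
      DifferentiableOn ℂ g {s : ℂ | 0 < s.re} ∧
      MemLp (fun ω : ℝ => g (Complex.I * ω)) 2 volume ∧
      (1 / (2 * Real.pi)) * ∫ ω : ℝ, ‖g (Complex.I * ω)‖ ^ 2 = 2 * ∑ i, 1 / z i := by
  have haeq : (fun ω : ℝ => Gb z (Complex.I * ω))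
      =ᵐ[volume] (fun ω : ℝ =>
        (1 - ∏ i, (((z i : ℂ) - Complex.I * ω) / ((z i : ℂ) + Complex.I * ω))) / (Complex.I * ω)) := by
    filter_upwards [ae_ne_zero] with ω hω
    exact Gb_eq hz (by simp) (I_mul_ne hω)
  refine ⟨fun s => (1 - ∏ i, (((z i : ℂ) - s) / ((z i : ℂ) + s))) / s,
    fun s _ => rfl, ?_, ?_, ?_⟩
  · have hG : DifferentiableOn ℂ (Gb z) {s : ℂ | 0 < s.re} := fun s hs =>
      (Gb_diff hz (le_of_lt hs)).differentiableWithinAt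
    refine hG.congr fun s hs => ?_
    have hs' : (0:ℝ) < s.re := hs
    have hsne : s ≠ 0 := by
      intro h0; rw [h0] at hs'; simp at hs'
    exact (Gb_eq hz hs'.le hsne).symm
  · have hmem : MemLp (fun ω : ℝ => Gb z (Complex.I * ω)) 2 volume := by
      rw [memLp_two_iff_integrable_sq_norm (phi_cont z hz).aestronglyMeasurable]
      exact (main_ind n z hz).1
    exact hmem.ae_eq haeq
  · have haeq2 : (fun ω : ℝ =>
        ‖(1 - ∏ i, (((z i : ℂ) - Complex.I * ω) / ((z i : ℂ) + Complex.I * ω)))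
          / (Complex.I * ω)‖ ^ 2)
        =ᵐ[volume] (fun ω : ℝ => ‖Gb z (Complex.I * ω)‖ ^ 2) := by
      filter_upwards [haeq] with ω hω
      rw [hω]
    rw [MeasureTheory.integral_congr_ae haeq2, (main_ind n z hz).2]
    have hπ : Real.pi ≠ 0 := Real.pi_ne_zero
    field_simp
    ring
end
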